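/- arXiv:1503.03739 — 7 statements merged into one kernel-verified Lean document; each statement's English description precedes it below -/
import Mathlib

section
/- If a Bayesian game has a universal potential function Φ : A → ℝ (i.e., for every action profile a and every unilateral deviation a_i', c_i(a) − c_i(a_i', a_{-i}) = Φ(a) − Φ(a_i', a_{-i})), then the induced normal-form game over Bayesian strategies s_i : T_i → A_i with costs K_i(s) = E_t[c_i(s(t))] is an exact potential game with potential Ψ(s) = E_t[Φ(s(t))]. -/
/-! For every type profile `t`, playing the deviated strategy profile `(s'_i, s_{-i})` yields
the action profile `s(t)` with only the `i`-th action replaced by `s'_i(t_i)`. Hence the universal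
potential equation holds pointwise in `t`, and taking the prior-weighted sum preserves it. -/

theorem Function.update_apply_eval {ι : Type*} [DecidableEq ι] {T A : ι → Type*}
    (s : ∀ i, T i → A i) (i : ι) (s' : T i → A i) (t : ∀ j, T j) :
    (fun j => Function.update s i s' j (t j)) = Function.update (fun j => s j (t j)) i (s' (t i)) :=
  funext fun j => Function.apply_update (fun j σ => σ (t j)) s i s' j

theorem Finset.weighted_sum_sub_eq_of_sub_eq {ι : Type*} [Fintype ι] (w f g f' g' : ι → ℝ)
    (h : ∀ x, f x - g x = f' x - g' x) :
    ∑ x, w x * f x - ∑ x, w x * g x = ∑ x, w x * f' x - ∑ x, w x * g' x := by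
  simp only [← Finset.sum_sub_distrib, ← mul_sub, h]

theorem bayesian_potential_game_general
    {n : ℕ} {T : Fin n → Type*} {A : Fin n → Type*}
    [∀ i, Fintype (T i)]
    (π : ∀ i, T i → ℝ)
    (c : Fin n → (∀ i, A i) → ℝ) (Φ : (∀ i, A i) → ℝ)
    (hpot : ∀ (a : ∀ i, A i) (i : Fin n) (a' : A i),
      c i a - c i (Function.update a i a') = Φ a - Φ (Function.update a i a'))
    (K : Fin n → (∀ i, T i → A i) → ℝ)
    (hK : ∀ i s, K i s =
      ∑ t : ∀ j, T j, (∏ j, π j (t j)) * c i (fun j => s j (t j)))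
    (Ψ : (∀ i, T i → A i) → ℝ)
    (hΨ : ∀ s, Ψ s =
      ∑ t : ∀ j, T j, (∏ j, π j (t j)) * Φ (fun j => s j (t j))) :
    ∀ (s : ∀ i, T i → A i) (i : Fin n) (s' : T i → A i),
      K i s - K i (Function.update s i s') = Ψ s - Ψ (Function.update s i s') := by
  intro s i s'
  rw [hK, hK, hΨ, hΨ]
  refine Finset.weighted_sum_sub_eq_of_sub_eq _ _ _ _ _ fun t => ?_
  simp only [Function.update_apply_eval, hpot]

/-- In a Bayesian game with a universal exact potential `Φ`,
the induced normal-form game over Bayesian strategies with expected costs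
`K i s = E_t[c i (s(t))]` is an exact potential game with potential
`Ψ s = E_t[Φ (s(t))]`. -/
theorem bayesian_potential_game
    {n : ℕ} {T : Fin n → Type*} {A : Fin n → Type*}
    [∀ i, Fintype (T i)] [∀ i, Fintype (A i)]
    (π : ∀ i, T i → ℝ)
    (hπ0 : ∀ i t, 0 ≤ π i t) (hπ1 : ∀ i, ∑ t, π i t = 1)
    (c : Fin n → (∀ i, A i) → ℝ) (Φ : (∀ i, A i) → ℝ)
    (hpot : ∀ (a : ∀ i, A i) (i : Fin n) (a' : A i),
      c i a - c i (Function.update a i a') = Φ a - Φ (Function.update a i a'))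
    (K : Fin n → (∀ i, T i → A i) → ℝ)
    (hK : ∀ i s, K i s =
      ∑ t : ∀ j, T j, (∏ j, π j (t j)) * c i (fun j => s j (t j)))
    (Ψ : (∀ i, T i → A i) → ℝ)
    (hΨ : ∀ s, Ψ s =
      ∑ t : ∀ j, T j, (∏ j, π j (t j)) * Φ (fun j => s j (t j))) :
    ∀ (s : ∀ i, T i → A i) (i : Fin n) (s' : T i → A i),
      K i s - K i (Function.update s i s') = Ψ s - Ψ (Function.update s i s') :=
  bayesian_potential_game_general π c Φ hpot K hK Ψ hΨ
end

section
/- Bayesian Potential Method: In a Bayesian potential game whose universal potential Φ is (λ, μ)-close to the universal social cost C (i.e., λ·C(a) ≤ Φ(a) ≤ μ·C(a) for all action profiles a, with λ, μ > 0), the Bayesian price of stability is at most (μ/λ)·IG, where IG is the information gap. Concretely: the potential-minimizing Bayes-Nash equilibrium s* satisfies K(s*) ≤ (μ/λ)·IG·E_t[OPT(t)]. -/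
/-!
Closeness turns the potential into a proxy for the social cost: taking expectations,
`lam · K(s*) ≤ E[Φ ∘ s*] ≤ E[Φ ∘ s̃] ≤ mu · K(s̃)`, where the middle step is the
minimality of `s*` for the expected potential, tested against the feasible profile `s̃`.
Dividing by `lam` and writing `K(s̃) = IG · E_t[OPT(t)]` gives the bound.
-/

section WeightedSum

variable {Ω X : Type*} [Fintype Ω] {w : Ω → ℝ}

theorem weighted_sum_le_weighted_sum (hw : ∀ t, 0 ≤ w t) {f g : Ω → ℝ}
    (hfg : ∀ t, f t ≤ g t) : ∑ t, w t * f t ≤ ∑ t, w t * g t :=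
  Finset.sum_le_sum fun t _ => mul_le_mul_of_nonneg_left (hfg t) (hw t)

theorem weighted_sum_const_mul (r : ℝ) (f : Ω → ℝ) :
    ∑ t, w t * (r * f t) = r * ∑ t, w t * f t := by
  rw [Finset.mul_sum]
  exact Finset.sum_congr rfl fun t _ => mul_left_comm _ _ _

theorem mul_weighted_cost_le_of_weighted_potential_le (hw : ∀ t, 0 ≤ w t)
    {C Φ : X → ℝ} {lam mu : ℝ} (hclose : ∀ a, lam * C a ≤ Φ a ∧ Φ a ≤ mu * C a)
    {x y : Ω → X} (hxy : ∑ t, w t * Φ (x t) ≤ ∑ t, w t * Φ (y t)) :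
    lam * ∑ t, w t * C (x t) ≤ mu * ∑ t, w t * C (y t) := by
  rw [← weighted_sum_const_mul, ← weighted_sum_const_mul]
  calc ∑ t, w t * (lam * C (x t))
      ≤ ∑ t, w t * Φ (x t) := weighted_sum_le_weighted_sum hw fun t => (hclose _).1
    _ ≤ ∑ t, w t * Φ (y t) := hxy
    _ ≤ ∑ t, w t * (mu * C (y t)) := weighted_sum_le_weighted_sum hw fun t => (hclose _).2

end WeightedSum

theorem bayesian_potential_method_general
    {n : ℕ} {T : Fin n → Type*} {A : Fin n → Type*}
    [∀ i, Fintype (T i)]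
    (π : ∀ i, T i → ℝ)
    (hπ0 : ∀ i t, 0 ≤ π i t)
    (c : Fin n → (∀ i, A i) → ℝ) (Φ : (∀ i, A i) → ℝ)
    (lam mu : ℝ) (hlam : 0 < lam)
    (hclose : ∀ a : ∀ i, A i,
      lam * (∑ i, c i a) ≤ Φ a ∧ Φ a ≤ mu * (∑ i, c i a))
    (F : ∀ i, T i → Set (A i))
    -- expected social cost of a Bayesian strategy profile
    (K : (∀ i, T i → A i) → ℝ)
    (hKdef : ∀ s, K s =
      ∑ t : ∀ j, T j, (∏ j, π j (t j)) * ∑ i, c i (fun j => s j (t j)))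
    (EOPT : ℝ)
    (hEOPT : 0 < EOPT)
    -- stilde : the social-cost minimizing Bayesian strategy profile
    (stilde : ∀ i, T i → A i)
    (hstfeas : ∀ i t, stilde i t ∈ F i t)
    -- the information gap
    (IG : ℝ) (hIG : IG = K stilde / EOPT)
    -- sstar : the potential-minimizing Bayes-Nash equilibrium
    (sstar : ∀ i, T i → A i)
    (hsmin : ∀ s : ∀ i, T i → A i, (∀ i t, s i t ∈ F i t) →
      (∑ t : ∀ j, T j, (∏ j, π j (t j)) * Φ (fun j => sstar j (t j)))
        ≤ ∑ t : ∀ j, T j, (∏ j, π j (t j)) * Φ (fun j => s j (t j))) :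
    K sstar ≤ (mu / lam) * IG * EOPT := by
  have hprior : ∀ t : ∀ j, T j, 0 ≤ ∏ j, π j (t j) := fun t =>
    Finset.prod_nonneg fun j _ => hπ0 j (t j)
  have hK : lam * K sstar ≤ mu * K stilde := by
    rw [hKdef, hKdef]
    exact mul_weighted_cost_le_of_weighted_potential_le hprior hclose (hsmin stilde hstfeas)
  have hIG_EOPT : IG * EOPT = K stilde := by
    rw [hIG, div_mul_cancel₀ _ hEOPT.ne']
  rw [mul_assoc, hIG_EOPT, div_mul_eq_mul_div, le_div_iff₀ hlam, mul_comm]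
  exact hK

/-- Bayesian Potential Method: in a Bayesian potential game
whose universal potential `Φ` is `(lam, mu)`-close to the universal social
cost `C(a) = ∑ i, c i a`, the potential-minimizing Bayes-Nash equilibrium
`sstar` satisfies `K(sstar) ≤ (mu/lam) · IG · E_t[OPT(t)]`, where
`IG = K(stilde)/E_t[OPT(t)]` and `stilde` minimizes the expected social
cost `K` over all (feasible) Bayesian strategy profiles. -/
theorem bayesian_potential_method
    {n : ℕ} {T : Fin n → Type*} {A : Fin n → Type*}
    [∀ i, Fintype (T i)] [∀ i, Fintype (A i)]
    (π : ∀ i, T i → ℝ)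
    (hπ0 : ∀ i t, 0 ≤ π i t) (hπ1 : ∀ i, ∑ t, π i t = 1)
    (c : Fin n → (∀ i, A i) → ℝ) (Φ : (∀ i, A i) → ℝ)
    (hpot : ∀ (a : ∀ i, A i) (i : Fin n) (a' : A i),
      c i a - c i (Function.update a i a') = Φ a - Φ (Function.update a i a'))
    (lam mu : ℝ) (hlam : 0 < lam) (hmu : 0 < mu)
    (hclose : ∀ a : ∀ i, A i,
      lam * (∑ i, c i a) ≤ Φ a ∧ Φ a ≤ mu * (∑ i, c i a))
    (F : ∀ i, T i → Set (A i))
    -- expected social cost of a Bayesian strategy profile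
    (K : (∀ i, T i → A i) → ℝ)
    (hKdef : ∀ s, K s =
      ∑ t : ∀ j, T j, (∏ j, π j (t j)) * ∑ i, c i (fun j => s j (t j)))
    -- ex-post optimal social cost for each type profile
    (opt : (∀ j, T j) → ℝ)
    (hopt : ∀ t : ∀ j, T j, IsLeast
      {x | ∃ a : ∀ i, A i, (∀ i, a i ∈ F i (t i)) ∧ x = ∑ i, c i a} (opt t))
    (EOPT : ℝ) (hEOPTdef : EOPT = ∑ t : ∀ j, T j, (∏ j, π j (t j)) * opt t)
    (hEOPT : 0 < EOPT)
    -- stilde : the social-cost minimizing Bayesian strategy profile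
    (stilde : ∀ i, T i → A i)
    (hstfeas : ∀ i t, stilde i t ∈ F i t)
    (hstmin : ∀ s : ∀ i, T i → A i, (∀ i t, s i t ∈ F i t) → K stilde ≤ K s)
    -- the information gap
    (IG : ℝ) (hIG : IG = K stilde / EOPT)
    -- sstar : the potential-minimizing Bayes-Nash equilibrium
    (sstar : ∀ i, T i → A i)
    (hsfeas : ∀ i t, sstar i t ∈ F i t)
    (hsmin : ∀ s : ∀ i, T i → A i, (∀ i t, s i t ∈ F i t) →
      (∑ t : ∀ j, T j, (∏ j, π j (t j)) * Φ (fun j => sstar j (t j)))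
        ≤ ∑ t : ∀ j, T j, (∏ j, π j (t j)) * Φ (fun j => s j (t j))) :
    K sstar ≤ (mu / lam) * IG * EOPT :=
  bayesian_potential_method_general π hπ0 c Φ lam mu hlam hclose F K hKdef EOPT hEOPT stilde hstfeas
    IG hIG sstar hsmin
end

section
/- Rosenthal's potential Φ(a) = Σ_{e∈E} Σ_{t=1}^{n_e(a)} c_e/t of a network design (fair cost sharing) game with n players is (1, H_n)-close to the social cost C(a) = Σ_{e : n_e(a)≥1} c_e, i.e., C(a) ≤ Φ(a) ≤ H_n · C(a) for every action profile a, where H_n = Σ_{k=1}^n 1/k. -/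
/-! An element of load `k ≥ 1` contributes `c_e · H_k` to the potential, which lies between its
first summand `c_e` and `c_e · H_n`; an element of load `0` contributes to neither side. -/

open Finset

theorem sum_range_div_succ_eq_mul {α : Type*} [Semifield α] (c : α) (k : ℕ) :
    ∑ t ∈ range k, c / (t + 1) = (∑ t ∈ range k, (1 : α) / (t + 1)) * c := by
  rw [sum_mul]
  exact sum_congr rfl fun t _ => by rw [one_div_mul_eq_div]

section HarmonicSums

variable {α : Type*} [Field α] [LinearOrder α] [IsStrictOrderedRing α]

theorem le_sum_range_div_succ {c : α} (hc : 0 ≤ c) {k : ℕ} (hk : 1 ≤ k) :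
    c ≤ ∑ t ∈ range k, c / (t + 1) := by
  have h0 : (0 : ℕ) ∈ range k := mem_range.2 hk
  calc c = c / ((0 : ℕ) + 1) := by simp
    _ ≤ ∑ t ∈ range k, c / (t + 1) :=
      single_le_sum (f := fun t : ℕ => c / (t + 1)) (fun t _ => by positivity) h0

theorem sum_range_div_succ_le_harmonic_mul {c : α} (hc : 0 ≤ c) {k n : ℕ} (hkn : k ≤ n) :
    ∑ t ∈ range k, c / (t + 1) ≤ (∑ t ∈ range n, (1 : α) / (t + 1)) * c := by
  rw [sum_range_div_succ_eq_mul]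
  gcongr

end HarmonicSums

/-- Rosenthal's potential of a fair cost-sharing (network design)
game with `n` players is `(1, H_n)`-close to the social cost:
`C(a) ≤ Φ(a) ≤ H_n · C(a)` for every action profile `a`. -/
theorem rosenthal_potential_close
    {E : Type*} [Fintype E] [DecidableEq E] (n : ℕ)
    (c : E → ℝ) (hc : ∀ e, 0 ≤ c e)
    (a : Fin n → Finset E) :
    (∑ e ∈ univ.filter (fun e => 1 ≤ (univ.filter (fun i => e ∈ a i)).card), c e)
      ≤ (∑ e : E, ∑ t ∈ Finset.range ((univ.filter (fun i => e ∈ a i)).card),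
          c e / (t + 1))
    ∧ (∑ e : E, ∑ t ∈ Finset.range ((univ.filter (fun i => e ∈ a i)).card),
          c e / (t + 1))
      ≤ (∑ k ∈ Finset.range n, (1 : ℝ) / (k + 1)) *
          ∑ e ∈ univ.filter (fun e => 1 ≤ (univ.filter (fun i => e ∈ a i)).card), c e := by
  set load : E → ℕ := fun e => (univ.filter (fun i => e ∈ a i)).card
  have load_le : ∀ e, load e ≤ n := fun e => (card_le_univ _).trans (Fintype.card_fin n).le
  have potential_eq : ∑ e, ∑ t ∈ range (load e), c e / (t + 1)
      = ∑ e ∈ univ.filter (fun e => 1 ≤ load e), ∑ t ∈ range (load e), c e / (t + 1) := by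
    refine (sum_filter_of_ne fun e _ he => ?_).symm
    exact Nat.one_le_iff_ne_zero.2 fun h0 => he (by rw [h0, sum_range_zero])
  rw [potential_eq, mul_sum]
  exact ⟨sum_le_sum fun e he => le_sum_range_div_succ (hc e) (mem_filter.1 he).2,
    sum_le_sum fun e _ => sum_range_div_succ_le_harmonic_mul (hc e) (load_le e)⟩
end

section
/- For the metric Steiner tree problem, the cost shares ξ(D, x) = (1/2)·d(D∪{r}∖{x}, x) for x ∈ D (and 0 otherwise) are competitive: Σ_{x∈D} ξ(D, x) ≤ c(OPT(D)), where OPT(D) is a minimum-cost Steiner tree connecting D ∪ {r}. -/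
/-!
Along the edges of a connected edge set one builds a closed walk from `r` through every point of
`S = D ∪ {r}`, using each edge at most twice (once out and once back, when it first reaches a new
vertex). Shortcut this walk to the points of `S`: every `x ∈ S` other than `r` is charged the step
into its first visit, which starts at another point of `S` and so is at least
`d(S ∖ {x}, x)`, and `r` is charged the final return. Hence
`∑_{x ∈ S} d(S ∖ {x}, x) ≤ 2 c(Es)`.
-/

open Finset

noncomputable def walkCost {V : Type*} [PseudoMetricSpace V] : List V → ℝ
  | a :: b :: l => dist a b + walkCost (b :: l)
  | _ => 0

section Walks

variable {V : Type*} [PseudoMetricSpace V]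

@[simp] lemma walkCost_nil : walkCost ([] : List V) = 0 := rfl

@[simp] lemma walkCost_singleton (a : V) : walkCost [a] = 0 := rfl

@[simp] lemma walkCost_cons_cons (a b : V) (l : List V) :
    walkCost (a :: b :: l) = dist a b + walkCost (b :: l) := rfl

lemma walkCost_nonneg : ∀ l : List V, 0 ≤ walkCost l
  | [] | [_] => le_rfl
  | _ :: b :: l => add_nonneg dist_nonneg (walkCost_nonneg (b :: l))

lemma walkCost_append_cons (l : List V) (b : V) (m : List V) :
    walkCost (l ++ b :: m) = walkCost (l ++ [b]) + walkCost (b :: m) := by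
  induction l with
  | nil => simp
  | cons a l ih =>
    cases l with
    | nil => simp
    | cons c l => simp only [List.cons_append, walkCost_cons_cons] at ih ⊢; linarith

lemma walkCost_cons_le_cons_cons (a b : V) (l : List V) :
    walkCost (a :: l) ≤ walkCost (a :: b :: l) := by
  cases l with
  | nil => simp
  | cons c l =>
    simp only [walkCost_cons_cons]
    linarith [dist_triangle a b c]

lemma dist_le_walkCost {a b : V} {l : List V} (h : (a :: l).getLast? = some b) :
    dist a b ≤ walkCost (a :: l) := by
  induction l generalizing a with
  | nil => simp_all
  | cons c l ih =>
    rw [List.getLast?_cons_cons] at h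
    simpa using (dist_triangle a c b).trans (add_le_add_right (ih h) _)

lemma walkCost_detour (A B : List V) (u w : V) :
    walkCost (A ++ u :: w :: u :: B) = walkCost (A ++ u :: B) + 2 * dist u w := by
  rw [walkCost_append_cons, walkCost_append_cons A u B]
  simp only [walkCost_cons_cons, dist_comm w u]
  ring

end Walks

lemma List.exists_eq_append_cons_forall_not {α : Type*} (p : α → Prop) :
    ∀ {l : List α}, (∃ x ∈ l, p x) →
      ∃ A y B, l = A ++ y :: B ∧ p y ∧ ∀ z ∈ B, ¬ p z
  | [], ⟨_, hx, _⟩ => absurd hx List.not_mem_nil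
  | a :: l, h => by
    by_cases hl : ∃ x ∈ l, p x
    · obtain ⟨A, y, B, rfl, hy, hB⟩ := exists_eq_append_cons_forall_not p hl
      exact ⟨a :: A, y, B, rfl, hy, hB⟩
    · push Not at hl
      obtain ⟨x, hx, hpx⟩ := h
      rcases List.mem_cons.mp hx with rfl | hx
      · exact ⟨[], x, l, rfl, hpx, hl⟩
      · exact absurd hpx (hl x hx)

section Shortcut

variable {V : Type*} [PseudoMetricSpace V] [DecidableEq V]

/-- Each `x ∈ T` is charged the shortcut from the point of `S` visited last before its first
visit. -/
lemma sum_infDist_erase_le_walkCost {S T : Finset V} (hTS : T ⊆ S) {a : V} (ha : a ∈ S)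
    (haT : a ∉ T) {L : List V} (hTL : ∀ x ∈ T, x ∈ L) :
    ∑ x ∈ T, Metric.infDist x (S.erase x : Set V) ≤ walkCost (a :: L) := by
  induction L generalizing a T with
  | nil =>
    rw [eq_empty_of_forall_notMem fun x hx => List.not_mem_nil (hTL x hx), sum_empty]
    exact walkCost_nonneg _
  | cons b L ih =>
    have hTL' : ∀ x ∈ T.erase b, x ∈ L := fun x hx =>
      (List.mem_cons.mp (hTL x (mem_of_mem_erase hx))).resolve_left (ne_of_mem_erase hx)
    by_cases hb : b ∈ T
    · have hab : Metric.infDist b (S.erase b : Set V) ≤ dist a b := by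
        rw [dist_comm]
        exact Metric.infDist_le_dist_of_mem
          (mem_coe.mpr (mem_erase.mpr ⟨fun h => haT (h ▸ hb), ha⟩))
      rw [← add_sum_erase T _ hb, walkCost_cons_cons]
      exact add_le_add hab (ih ((erase_subset b T).trans hTS) (hTS hb) (notMem_erase b T) hTL')
    · rw [erase_eq_of_notMem hb] at hTL'
      exact (ih hTS ha haT hTL').trans (walkCost_cons_le_cons_cons a b L)

lemma sum_infDist_erase_le_walkCost_of_closed {S : Finset V} {r : V} (hr : r ∈ S)
    {W : List V} (hhead : W.head? = some r) (hlast : W.getLast? = some r)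
    (hcov : ∀ x ∈ S, x ∈ W) :
    ∑ x ∈ S, Metric.infDist x (S.erase x : Set V) ≤ walkCost W := by
  rw [← add_sum_erase S _ hr]
  -- `r` is charged the return from the last point of `S.erase r` on the walk
  obtain h | ⟨y₀, hy₀⟩ := (S.erase r).eq_empty_or_nonempty
  · simpa [h] using walkCost_nonneg W
  obtain ⟨P, y, Q, rfl, hy, hQ⟩ := List.exists_eq_append_cons_forall_not (· ∈ S.erase r)
    ⟨y₀, hcov y₀ (mem_of_mem_erase hy₀), hy₀⟩
  obtain ⟨P, rfl⟩ : ∃ P', P = r :: P' := by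
    cases P with
    | nil => exact absurd (Option.some.inj hhead) (ne_of_mem_erase hy)
    | cons a P' => exact ⟨P', by simp_all⟩
  have hroot : Metric.infDist r (S.erase r : Set V) ≤ walkCost (y :: Q) := by
    rw [List.getLast?_append_cons] at hlast
    calc Metric.infDist r (S.erase r : Set V)
        ≤ dist r y := Metric.infDist_le_dist_of_mem (mem_coe.mpr hy)
      _ = dist y r := dist_comm r y
      _ ≤ walkCost (y :: Q) := dist_le_walkCost hlast
  have hrest : ∑ x ∈ S.erase r, Metric.infDist x (S.erase x : Set V)
      ≤ walkCost (r :: (P ++ [y])) := by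
    refine sum_infDist_erase_le_walkCost (erase_subset r S) hr (notMem_erase r S) fun x hx => ?_
    have hxW := hcov x (mem_of_mem_erase hx)
    simp only [List.mem_append, List.mem_cons] at hxW ⊢
    rcases hxW with (rfl | hxP) | rfl | hxQ
    · exact absurd rfl (ne_of_mem_erase hx)
    · exact .inl hxP
    · exact .inr (.inl rfl)
    · exact absurd hx (hQ x hxQ)
  rw [walkCost_append_cons, List.cons_append]
  linarith

end Shortcut

lemma Relation.ReflTransGen.exists_crossing_rel {α : Type*} {R : α → α → Prop}
    {p : α → Prop} {x y : α} (h : Relation.ReflTransGen R x y) (hx : p x) (hy : ¬ p y) :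
    ∃ u w, p u ∧ ¬ p w ∧ R u w := by
  induction h with
  | refl => exact absurd hx hy
  | @tail b c _ hbc ih =>
    by_cases hb : p b
    exacts [⟨b, c, hb, hy, hbc⟩, ih hb]

section Doubling

variable {V : Type*} [PseudoMetricSpace V]

/-- Invariant of the edge-doubling construction: the closed walk `W` at `r` runs along each edge
of `F` at most twice. -/
def IsDoubledTour (r : V) (F : Finset (V × V)) (W : List V) : Prop :=
  W.head? = some r ∧ W.getLast? = some r ∧ (∀ e ∈ F, e.1 ∈ W ∧ e.2 ∈ W) ∧
    walkCost W ≤ 2 * ∑ e ∈ F, dist e.1 e.2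

lemma isDoubledTour_singleton (r : V) : IsDoubledTour r ∅ [r] := by
  simp [IsDoubledTour]

lemma IsDoubledTour.extend [DecidableEq V] {r u w : V} {F : Finset (V × V)} {W : List V}
    (hW : IsDoubledTour r F W) (hu : u ∈ W) (hw : w ∉ W) {e : V × V}
    (he : e = (u, w) ∨ e = (w, u)) :
    e ∉ F ∧ ∃ W', IsDoubledTour r (insert e F) W' := by
  obtain ⟨hhead, hlast, hFW, hcost⟩ := hW
  have heF : e ∉ F := fun h => by
    rcases he with rfl | rfl
    exacts [hw (hFW _ h).2, hw (hFW _ h).1]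
  refine ⟨heF, ?_⟩
  obtain ⟨A, B, rfl⟩ := List.append_of_mem hu
  refine ⟨A ++ u :: w :: u :: B, ?_, ?_, ?_, ?_⟩
  · cases A <;> simpa using hhead
  · rwa [List.getLast?_append_cons, List.getLast?_cons_cons, List.getLast?_cons_cons,
      ← List.getLast?_append_cons A]
  · have hsub : ∀ x ∈ A ++ u :: B, x ∈ A ++ u :: w :: u :: B := by
      simp only [List.mem_append, List.mem_cons]
      tauto
    intro e' he'
    rcases mem_insert.mp he' with rfl | he'
    · rcases he with rfl | rfl <;> simp
    · exact ⟨hsub _ (hFW e' he').1, hsub _ (hFW e' he').2⟩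
  · have hde : dist e.1 e.2 = dist u w := by rcases he with rfl | rfl <;> simp [dist_comm]
    rw [walkCost_detour, sum_insert heF, hde]
    linarith

lemma IsDoubledTour.exists_covering {Es : Finset (V × V)} {r : V} {S : Finset V}
    (hS : ∀ x ∈ S, Relation.ReflTransGen (fun u v => (u, v) ∈ Es ∨ (v, u) ∈ Es) r x)
    {F : Finset (V × V)} (hF : F ⊆ Es) {W : List V} (hW : IsDoubledTour r F W) :
    ∃ F ⊆ Es, ∃ W, IsDoubledTour r F W ∧ ∀ x ∈ S, x ∈ W := by
  classical
  induction h : #(Es \ F) using Nat.strong_induction_on generalizing F W with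
  | _ n ih =>
  by_cases hcov : ∀ x ∈ S, x ∈ W
  · exact ⟨F, hF, W, hW, hcov⟩
  push Not at hcov
  obtain ⟨x, hxS, hxW⟩ := hcov
  have hrW : r ∈ W := List.mem_of_mem_head? hW.1
  obtain ⟨u, w, hu, hw, huw⟩ := (hS x hxS).exists_crossing_rel (p := (· ∈ W)) hrW hxW
  obtain ⟨e, heEs, he⟩ : ∃ e ∈ Es, e = (u, w) ∨ e = (w, u) := by
    rcases huw with huw | huw
    exacts [⟨_, huw, .inl rfl⟩, ⟨_, huw, .inr rfl⟩]
  obtain ⟨heF, W', hW'⟩ := hW.extend hu hw he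
  refine ih _ ?_ (insert_subset heEs hF) hW' rfl
  rw [← h, sdiff_insert]
  exact card_erase_lt_of_mem (mem_sdiff.mpr ⟨heEs, heF⟩)

theorem exists_closed_walk_covering (Es : Finset (V × V)) (r : V) (S : Finset V)
    (hS : ∀ x ∈ S, Relation.ReflTransGen (fun u v => (u, v) ∈ Es ∨ (v, u) ∈ Es) r x) :
    ∃ W : List V, W.head? = some r ∧ W.getLast? = some r ∧ (∀ x ∈ S, x ∈ W) ∧
      walkCost W ≤ 2 * ∑ e ∈ Es, dist e.1 e.2 := by
  obtain ⟨F, hF, W, ⟨hhead, hlast, -, hcost⟩, hcov⟩ :=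
    (isDoubledTour_singleton r).exists_covering hS (empty_subset Es)
  refine ⟨W, hhead, hlast, hcov, hcost.trans ?_⟩
  gcongr

end Doubling

/-- For the metric Steiner tree problem with root `r` and client
set `D`, the cost shares `ξ(D,x) = (1/2)·d((D ∪ {r}) \ {x}, x)` are
competitive: their sum over `x ∈ D` is at most the cost of any connected
subgraph `Es` spanning `D ∪ {r}` (in particular, at most the cost of the
minimum-cost Steiner tree on `D ∪ {r}`). -/
theorem steiner_cost_shares_competitive
    {V : Type*} [MetricSpace V] [DecidableEq V]
    (r : V) (D : Finset V)
    (Es : Finset (V × V))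
    (hconn : ∀ x ∈ (insert r D : Finset V), ∀ y ∈ (insert r D : Finset V),
      Relation.ReflTransGen (fun u v => (u, v) ∈ Es ∨ (v, u) ∈ Es) x y) :
    ∑ x ∈ D, (1 / 2 : ℝ) * Metric.infDist x (↑((insert r D).erase x) : Set V)
      ≤ ∑ e ∈ Es, dist e.1 e.2 := by
  obtain ⟨W, hhead, hlast, hcov, hcost⟩ :=
    exists_closed_walk_covering Es r (insert r D) (hconn r (mem_insert_self r D))
  have hshares := sum_infDist_erase_le_walkCost_of_closed (mem_insert_self r D) hhead hlast hcov
  have hD : ∑ x ∈ D, Metric.infDist x ((insert r D).erase x : Set V)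
      ≤ ∑ x ∈ insert r D, Metric.infDist x ((insert r D).erase x : Set V) :=
    sum_le_sum_of_subset_of_nonneg (subset_insert r D) fun _ _ _ => Metric.infDist_nonneg
  rw [← mul_sum]
  linarith
end

section
/- I.i.d. information gap bound: if the ex-post cost-minimization problem of a Bayesian network design game admits an α-approximation algorithm 𝒜 and an augmentation algorithm ℬ with a β-strict, competitive cost-sharing scheme ξ, then when all n players' types are drawn i.i.d. from ρ, the information gap is at most α + β; i.e., there exist Bayesian strategies s with K(s) ≤ (α+β)·E_{R∼ρⁿ}[c(OPT(R))]. -/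
/-! Every player plays the same strategy: fix a sample `D` of `n - 1` types drawn i.i.d. from `ρ`,
and play `A D ∪ B (A D) t` for the realized own type `t`. For realized types `R` the union of these
costs at most `c (A D) + β ∑ᵢ ξ (Rᵢ ::ₘ D) Rᵢ`. On average over `D`, `c (A D) ≤ α E[OPT D]`
`≤ α E[OPT R]` by monotonicity of the optimum, and since `Rᵢ ::ₘ D` has the law of `R` with `Rᵢ` one
of its members, the average of `∑ᵢ ξ (Rᵢ ::ₘ D) Rᵢ` is `E[∑_{x ∈ R} ξ R x] ≤ E[OPT R]`. Some fixed
sample `D` is at least as good as the average. -/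

open Finset

lemma univ_val_map_insertNth {T : Type*} {m : ℕ} (i : Fin (m + 1)) (x : T) (d : Fin m → T) :
    (univ.val.map (i.insertNth x d) : Multiset T) = x ::ₘ univ.val.map d := by
  rw [Fin.univ_succAbove m i]
  simp [Function.comp_def]

section Expectation

variable {T : Type*} [Fintype T]

def iidExpect (ρ : T → ℝ) (k : ℕ) (f : (Fin k → T) → ℝ) : ℝ :=
  ∑ R : Fin k → T, (∏ i, ρ (R i)) * f R

variable {ρ : T → ℝ} {k m : ℕ}

lemma iidExpect_add (f g : (Fin k → T) → ℝ) :
    iidExpect ρ k (fun R => f R + g R) = iidExpect ρ k f + iidExpect ρ k g := by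
  simp only [iidExpect, mul_add, sum_add_distrib]

lemma iidExpect_const_mul (a : ℝ) (f : (Fin k → T) → ℝ) :
    iidExpect ρ k (fun R => a * f R) = a * iidExpect ρ k f := by
  simp only [iidExpect, mul_sum, mul_left_comm]

lemma iidExpect_sum {ι : Type*} (s : Finset ι) (f : ι → (Fin k → T) → ℝ) :
    iidExpect ρ k (fun R => ∑ i ∈ s, f i R) = ∑ i ∈ s, iidExpect ρ k (f i) := by
  simp only [iidExpect, mul_sum]
  exact sum_comm

lemma iidExpect_mono (hρ0 : ∀ t, 0 ≤ ρ t) {f g : (Fin k → T) → ℝ} (hfg : ∀ R, f R ≤ g R) :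
    iidExpect ρ k f ≤ iidExpect ρ k g :=
  sum_le_sum fun R _ => mul_le_mul_of_nonneg_left (hfg R) (prod_nonneg fun _ _ => hρ0 _)

lemma iidExpect_const (hρ1 : ∑ t, ρ t = 1) (a : ℝ) : iidExpect ρ k (fun _ => a) = a := by
  rw [iidExpect, ← sum_mul, ← Fintype.prod_sum, hρ1, prod_const_one, one_mul]

lemma iidExpect_succ (i : Fin (m + 1)) (f : (Fin (m + 1) → T) → ℝ) :
    iidExpect ρ (m + 1) f = ∑ x, ρ x * iidExpect ρ m (fun d => f (i.insertNth x d)) := by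
  rw [iidExpect, ← (Fin.insertNthEquiv (fun _ => T) i).sum_comp, Fintype.sum_prod_type]
  simp only [iidExpect, mul_sum, Fin.prod_univ_succAbove _ i, Fin.insertNthEquiv_apply,
    Fin.insertNth_apply_same, Fin.insertNth_apply_succAbove, mul_assoc]
  rfl

lemma iidExpect_apply (hρ1 : ∑ t, ρ t = 1) (i : Fin k) (f : T → ℝ) :
    iidExpect ρ k (fun R => f (R i)) = ∑ x, ρ x * f x := by
  cases k with
  | zero => exact i.elim0
  | succ m =>
    simp only [iidExpect_succ i, Fin.insertNth_apply_same, iidExpect_const hρ1]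

lemma exists_le_iidExpect (hρ0 : ∀ t, 0 ≤ ρ t) (hρ1 : ∑ t, ρ t = 1) (f : (Fin k → T) → ℝ) :
    ∃ R, f R ≤ iidExpect ρ k f := by
  have : Nonempty T := univ_nonempty_iff.mp (nonempty_of_sum_ne_zero (hρ1 ▸ one_ne_zero))
  obtain ⟨R, -, hR⟩ := exists_min_image univ f univ_nonempty
  exact ⟨R, (iidExpect_const hρ1 (f R)).symm.le.trans
    (iidExpect_mono hρ0 fun R' => hR R' (mem_univ R'))⟩

lemma iidExpect_le_iidExpect_succ (hρ0 : ∀ t, 0 ≤ ρ t) (hρ1 : ∑ t, ρ t = 1)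
    {g : Multiset T → ℝ} (hg : ∀ U x, g U ≤ g (x ::ₘ U)) :
    iidExpect ρ m (fun d => g (univ.val.map d)) ≤
      iidExpect ρ (m + 1) (fun V => g (univ.val.map V)) := by
  rw [iidExpect_succ 0]
  simp only [univ_val_map_insertNth]
  calc iidExpect ρ m (fun d => g (univ.val.map d))
      = ∑ x, ρ x * iidExpect ρ m (fun d => g (univ.val.map d)) := by
        rw [← sum_mul, hρ1, one_mul]
    _ ≤ _ := sum_le_sum fun x _ =>
        mul_le_mul_of_nonneg_left (iidExpect_mono hρ0 fun _ => hg _ x) (hρ0 x)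

/-- Exchangeability: player `j`'s cost share has the same law for every `j`, namely that of a
fresh draw `x ∼ ρ` joining `m` i.i.d. others. -/
lemma iidExpect_sum_shares (ξ : Multiset T → T → ℝ) :
    iidExpect ρ (m + 1) (fun V => ((univ.val.map V).map (fun x => ξ (univ.val.map V) x)).sum) =
      (m + 1) * iidExpect ρ m (fun d => ∑ x, ρ x * ξ (x ::ₘ univ.val.map d) x) := by
  have share_eq : ∀ j : Fin (m + 1),
      iidExpect ρ (m + 1) (fun V => ξ (univ.val.map V) (V j)) =
        iidExpect ρ m (fun d => ∑ x, ρ x * ξ (x ::ₘ univ.val.map d) x) := by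
    intro j
    simp only [iidExpect_succ j, Fin.insertNth_apply_same, univ_val_map_insertNth,
      iidExpect_sum, iidExpect_const_mul]
  simp only [Multiset.map_map, Function.comp_def]
  change iidExpect ρ (m + 1) (fun V => ∑ j, ξ (univ.val.map V) (V j)) = _
  rw [iidExpect_sum, sum_congr rfl fun j _ => share_eq j, sum_const, card_univ, Fintype.card_fin,
    nsmul_eq_mul, Nat.cast_succ]

end Expectation

section Cost

variable {E : Type*} [DecidableEq E] {c : E → ℝ}

lemma sum_union_le_of_nonneg (hc : ∀ e, 0 ≤ c e) (s t : Finset E) :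
    ∑ e ∈ s ∪ t, c e ≤ ∑ e ∈ s, c e + ∑ e ∈ t, c e := by
  calc ∑ e ∈ s ∪ t, c e ≤ ∑ e ∈ s ∪ t, c e + ∑ e ∈ s ∩ t, c e :=
        le_add_of_nonneg_right (sum_nonneg fun e _ => hc e)
    _ = ∑ e ∈ s, c e + ∑ e ∈ t, c e := sum_union_inter

lemma sum_biUnion_union_le {ι : Type*} (hc : ∀ e, 0 ≤ c e) (s : Finset ι) (F : Finset E)
    (G : ι → Finset E) :
    ∑ e ∈ s.biUnion (fun i => F ∪ G i), c e ≤ ∑ e ∈ F, c e + ∑ i ∈ s, ∑ e ∈ G i, c e := by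
  have hsub : s.biUnion (fun i => F ∪ G i) ⊆ F ∪ s.biUnion G :=
    biUnion_subset.mpr fun i hi => union_subset_union subset_rfl (subset_biUnion_of_mem G hi)
  calc ∑ e ∈ s.biUnion (fun i => F ∪ G i), c e
      ≤ ∑ e ∈ F ∪ s.biUnion G, c e := sum_le_sum_of_subset_of_nonneg hsub fun e _ _ => hc e
    _ ≤ ∑ e ∈ F, c e + ∑ e ∈ s.biUnion G, c e := sum_union_le_of_nonneg hc _ _
    _ ≤ _ := by
      rw [← sup_eq_biUnion]
      gcongr
      exact apply_sup_le_sum (f := fun S => ∑ e ∈ S, c e) sum_empty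
        (sum_union_le_of_nonneg hc _ _) s

variable {T : Type*} [Fintype T] {ρ : T → ℝ} {k : ℕ}

lemma iidExpect_sum_biUnion_union_le (hρ0 : ∀ t, 0 ≤ ρ t) (hρ1 : ∑ t, ρ t = 1)
    (hc : ∀ e, 0 ≤ c e) (F : Finset E) (G : T → Finset E) {w : T → ℝ}
    (hG : ∀ x, ∑ e ∈ G x, c e ≤ w x) :
    iidExpect ρ k (fun R => ∑ e ∈ univ.biUnion (fun i => F ∪ G (R i)), c e) ≤
      ∑ e ∈ F, c e + k * ∑ x, ρ x * w x := by
  calc iidExpect ρ k (fun R => ∑ e ∈ univ.biUnion (fun i => F ∪ G (R i)), c e)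
      ≤ iidExpect ρ k (fun R => ∑ e ∈ F, c e + ∑ i, w (R i)) := iidExpect_mono hρ0 fun R =>
        (sum_biUnion_union_le hc _ F _).trans (by gcongr with i; exact hG _)
    _ = ∑ e ∈ F, c e + k * ∑ x, ρ x * w x := by
      simp only [iidExpect_add, iidExpect_const hρ1, iidExpect_sum, iidExpect_apply hρ1,
        sum_const, card_univ, Fintype.card_fin, nsmul_eq_mul]

end Cost

section Covering

variable {T E : Type*} (c : E → ℝ) (Fa : T → Set (Finset E))

def solutionCosts (U : Multiset T) : Set ℝ :=
  {x | ∃ S : Finset E, (∀ t ∈ U, ∃ a ∈ Fa t, a ⊆ S) ∧ x = ∑ e ∈ S, c e}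

variable {c Fa}

lemma nonneg_of_isLeast_solutionCosts (hc : ∀ e, 0 ≤ c e) {U : Multiset T} {o : ℝ}
    (h : IsLeast (solutionCosts c Fa U) o) : 0 ≤ o := by
  obtain ⟨S, -, rfl⟩ := h.1
  exact sum_nonneg fun e _ => hc e

lemma le_of_isLeast_solutionCosts {U V : Multiset T} (hUV : U ⊆ V) {o o' : ℝ}
    (hU : IsLeast (solutionCosts c Fa U) o) (hV : IsLeast (solutionCosts c Fa V) o') :
    o ≤ o' := by
  obtain ⟨S, hS, rfl⟩ := hV.1
  exact hU.2 ⟨S, fun t ht => hS t (hUV ht), rfl⟩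

end Covering

def sampledStrategy {T E : Type*} [DecidableEq E] {m : ℕ} (A : Multiset T → Finset E)
    (B : Finset E → T → Finset E) (d : Fin m → T) (t : T) : Finset E :=
  A (univ.val.map d) ∪ B (A (univ.val.map d)) t

lemma sampledStrategy_feasible {T E : Type*} [DecidableEq E] {m : ℕ} {Fa : T → Set (Finset E)}
    {A : Multiset T → Finset E} {B : Finset E → T → Finset E}
    (hAfeas : ∀ U : Multiset T, ∀ t ∈ U, ∃ a ∈ Fa t, a ⊆ A U)
    (hB : ∀ (F : Finset E) (U : Multiset T) (x : T),
      (∀ t ∈ U, ∃ a ∈ Fa t, a ⊆ F) → ∀ t ∈ x ::ₘ U, ∃ a ∈ Fa t, a ⊆ F ∪ B F x)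
    (d : Fin m → T) (t : T) : ∃ a ∈ Fa t, a ⊆ sampledStrategy A B d t :=
  hB _ _ t (hAfeas _) t (Multiset.mem_cons_self t _)

theorem iidExpect_sampledStrategy_cost_le {T E : Type*} [Fintype T] [DecidableEq E] {m : ℕ}
    {ρ : T → ℝ} (hρ0 : ∀ t, 0 ≤ ρ t) (hρ1 : ∑ t, ρ t = 1) {c : E → ℝ} (hc : ∀ e, 0 ≤ c e)
    {α β : ℝ} (hα : 0 ≤ α) (hβ : 0 ≤ β) {A : Multiset T → Finset E}
    {B : Finset E → T → Finset E} {ξ : Multiset T → T → ℝ} {optc : Multiset T → ℝ}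
    (hopt_mono : ∀ U x, optc U ≤ optc (x ::ₘ U))
    (hAapx : ∀ U : Multiset T, ∑ e ∈ A U, c e ≤ α * optc U)
    (hcomp : ∀ U : Multiset T, (U.map (fun x => ξ U x)).sum ≤ optc U)
    (hstrict : ∀ (U : Multiset T) (x : T), ∑ e ∈ B (A U) x, c e ≤ β * ξ (x ::ₘ U) x) :
    iidExpect ρ m (fun d => iidExpect ρ (m + 1) (fun R =>
        ∑ e ∈ univ.biUnion (fun i => sampledStrategy A B d (R i)), c e)) ≤
      (α + β) * iidExpect ρ (m + 1) (fun V => optc (univ.val.map V)) := by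
  set share : Multiset T → ℝ := fun U => ∑ x, ρ x * ξ (x ::ₘ U) x
  have cost_le : ∀ d : Fin m → T, iidExpect ρ (m + 1) (fun R =>
      ∑ e ∈ univ.biUnion (fun i => sampledStrategy A B d (R i)), c e) ≤
        α * optc (univ.val.map d) + β * ((m + 1) * share (univ.val.map d)) := by
    intro d
    refine (iidExpect_sum_biUnion_union_le hρ0 hρ1 hc _ _ (hstrict _)).trans ?_
    simp only [share, Nat.cast_succ, mul_left_comm (ρ _) β, ← mul_sum, mul_left_comm _ β]
    gcongr
    exact hAapx _
  calc _ ≤ iidExpect ρ m (fun d =>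
          α * optc (univ.val.map d) + β * ((m + 1) * share (univ.val.map d))) :=
        iidExpect_mono hρ0 cost_le
    _ = α * iidExpect ρ m (fun d => optc (univ.val.map d)) +
          β * iidExpect ρ (m + 1)
            (fun V => ((univ.val.map V).map (fun x => ξ (univ.val.map V) x)).sum) := by
        rw [iidExpect_add, iidExpect_const_mul, iidExpect_const_mul, iidExpect_const_mul,
          iidExpect_sum_shares]
    _ ≤ α * iidExpect ρ (m + 1) (fun V => optc (univ.val.map V)) +
          β * iidExpect ρ (m + 1) (fun V => optc (univ.val.map V)) := by
        gcongr
        · exact iidExpect_le_iidExpect_succ hρ0 hρ1 hopt_mono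
        · exact iidExpect_mono hρ0 fun V => hcomp _
    _ = _ := by ring

theorem iid_information_gap_general
    {T E : Type*} [Fintype T] [DecidableEq E]
    (n : ℕ) (ρ : T → ℝ) (hρ0 : ∀ t, 0 ≤ ρ t) (hρ1 : ∑ t, ρ t = 1)
    (c : E → ℝ) (hc : ∀ e, 0 ≤ c e)
    (Fa : T → Set (Finset E))
    (α β : ℝ) (hα : 0 ≤ α) (hβ : 0 ≤ β)
    (A : Multiset T → Finset E) (B : Finset E → T → Finset E)
    (ξ : Multiset T → T → ℝ)
    (optc : Multiset T → ℝ)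
    -- optc U is the cost of a minimum-cost feasible solution for client set U
    (hopt : ∀ U : Multiset T, IsLeast
      {x | ∃ S : Finset E, (∀ t ∈ U, ∃ a ∈ Fa t, a ⊆ S) ∧ x = ∑ e ∈ S, c e}
      (optc U))
    -- A is an α-approximation algorithm
    (hAfeas : ∀ U : Multiset T, ∀ t ∈ U, ∃ a ∈ Fa t, a ⊆ A U)
    (hAapx : ∀ U : Multiset T, ∑ e ∈ A U, c e ≤ α * optc U)
    -- B is an augmentation algorithm
    (hB : ∀ (F : Finset E) (U : Multiset T) (x : T),
      (∀ t ∈ U, ∃ a ∈ Fa t, a ⊆ F) →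
      ∀ t ∈ x ::ₘ U, ∃ a ∈ Fa t, a ⊆ F ∪ B F x)
    -- the cost-sharing scheme: zero outside, competitive, β-strict w.r.t. (A,B)
    (hcomp : ∀ U : Multiset T, (U.map (fun x => ξ U x)).sum ≤ optc U)
    (hstrict : ∀ (U : Multiset T) (x : T),
      ∑ e ∈ B (A U) x, c e ≤ β * ξ (x ::ₘ U) x) :
    ∃ s : Fin n → T → Finset E,
      (∀ i t, ∃ a ∈ Fa t, a ⊆ s i t) ∧
      (∑ R : Fin n → T, (∏ i, ρ (R i)) *
          ∑ e ∈ Finset.univ.biUnion (fun i => s i (R i)), c e)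
        ≤ (α + β) *
            ∑ R : Fin n → T, (∏ i, ρ (R i)) * optc (Finset.univ.val.map R) := by
  cases n with
  | zero =>
    refine ⟨fun i => i.elim0, fun i => i.elim0, ?_⟩
    simpa using mul_nonneg (add_nonneg hα hβ) (nonneg_of_isLeast_solutionCosts hc (hopt 0))
  | succ m =>
    obtain ⟨d, hd⟩ := exists_le_iidExpect hρ0 hρ1 fun d : Fin m → T => iidExpect ρ (m + 1)
      fun R => ∑ e ∈ univ.biUnion (fun i => sampledStrategy A B d (R i)), c e
    refine ⟨fun _ => sampledStrategy A B d, fun _ => sampledStrategy_feasible hAfeas hB d,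
      hd.trans ?_⟩
    exact iidExpect_sampledStrategy_cost_le hρ0 hρ1 hc hα hβ
      (fun U x => le_of_isLeast_solutionCosts (c := c) (Fa := Fa) (Multiset.subset_cons U x)
        (hopt U) (hopt _))
      hAapx hcomp hstrict

/-- i.i.d. information gap bound: if the ex-post
cost-minimization problem of a Bayesian network design game admits an
`α`-approximation algorithm `A` and an augmentation algorithm `B` with a
`β`-strict, competitive cost-sharing scheme `ξ`, then when all `n` players'
types are drawn i.i.d. from `ρ` there exist (feasible) Bayesian strategies
`s` whose expected social cost is at most `(α+β) · E_{R∼ρⁿ}[c(OPT(R))]`;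
hence the information gap is at most `α + β`. Client sets are modelled as
multisets of types. -/
theorem iid_information_gap
    {T E : Type*} [Fintype T] [DecidableEq T] [Fintype E] [DecidableEq E]
    (n : ℕ) (ρ : T → ℝ) (hρ0 : ∀ t, 0 ≤ ρ t) (hρ1 : ∑ t, ρ t = 1)
    (c : E → ℝ) (hc : ∀ e, 0 ≤ c e)
    (Fa : T → Set (Finset E))
    (α β : ℝ) (hα : 0 ≤ α) (hβ : 0 ≤ β)
    (A : Multiset T → Finset E) (B : Finset E → T → Finset E)
    (ξ : Multiset T → T → ℝ) (hξnn : ∀ U x, 0 ≤ ξ U x)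
    (optc : Multiset T → ℝ)
    -- optc U is the cost of a minimum-cost feasible solution for client set U
    (hopt : ∀ U : Multiset T, IsLeast
      {x | ∃ S : Finset E, (∀ t ∈ U, ∃ a ∈ Fa t, a ⊆ S) ∧ x = ∑ e ∈ S, c e}
      (optc U))
    -- A is an α-approximation algorithm
    (hAfeas : ∀ U : Multiset T, ∀ t ∈ U, ∃ a ∈ Fa t, a ⊆ A U)
    (hAapx : ∀ U : Multiset T, ∑ e ∈ A U, c e ≤ α * optc U)
    -- B is an augmentation algorithm
    (hB : ∀ (F : Finset E) (U : Multiset T) (x : T),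
      (∀ t ∈ U, ∃ a ∈ Fa t, a ⊆ F) →
      ∀ t ∈ x ::ₘ U, ∃ a ∈ Fa t, a ⊆ F ∪ B F x)
    -- the cost-sharing scheme: zero outside, competitive, β-strict w.r.t. (A,B)
    (hξ0 : ∀ (U : Multiset T) (x : T), x ∉ U → ξ U x = 0)
    (hcomp : ∀ U : Multiset T, (U.map (fun x => ξ U x)).sum ≤ optc U)
    (hstrict : ∀ (U : Multiset T) (x : T),
      ∑ e ∈ B (A U) x, c e ≤ β * ξ (x ::ₘ U) x) :
    ∃ s : Fin n → T → Finset E,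
      (∀ i t, ∃ a ∈ Fa t, a ⊆ s i t) ∧
      (∑ R : Fin n → T, (∏ i, ρ (R i)) *
          ∑ e ∈ Finset.univ.biUnion (fun i => s i (R i)), c e)
        ≤ (α + β) *
            ∑ R : Fin n → T, (∏ i, ρ (R i)) * optc (Finset.univ.val.map R) :=
  iid_information_gap_general n ρ hρ0 hρ1 c hc Fa α β hα hβ A B ξ optc hopt hAfeas hAapx hB hcomp
    hstrict
end

section
/- Cross-monotone information gap bound: if the ex-post cost-minimization problem admits an α-approximation algorithm 𝒜 and augmentation algorithm ℬ with a β-strict, competitive, cross-monotone cost-sharing scheme ξ (ξ(D, x) is non-increasing in D), then when each player i's type is drawn independently from a possibly different distribution π_i, the information gap is at most α + β. -/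
open Finset

/-! Sample a profile `D ∼ π` and let a player of type `t` buy `A(D) ∪ B(A(D), t)`. For realized
types `R`, this costs at most `α · opt(D)` plus `β · ∑ᵢ ξ(D + Rᵢ, Rᵢ)`. By cross-monotonicity each
share only grows when `Rᵢ` replaces the `i`-th entry of `D` instead of joining it, and the profile
with that entry replaced is again distributed as `π`; so competitiveness bounds the expected shares
by `E[opt]`. Some sample `D` does at least as well as the average over `D`. -/

namespace Finset

theorem sum_union_le_add {E : Type*} [DecidableEq E] {c : E → ℝ} (hc : ∀ e, 0 ≤ c e)
    (s t : Finset E) : ∑ e ∈ s ∪ t, c e ≤ ∑ e ∈ s, c e + ∑ e ∈ t, c e := by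
  have hinter : 0 ≤ ∑ e ∈ s ∩ t, c e := sum_nonneg fun e _ => hc e
  linarith [sum_union_inter (s₁ := s) (s₂ := t) (f := c)]

theorem sum_biUnion_le_sum {ι E : Type*} [DecidableEq E] {c : E → ℝ} (hc : ∀ e, 0 ≤ c e)
    (s : Finset ι) (t : ι → Finset E) :
    ∑ e ∈ s.biUnion t, c e ≤ ∑ i ∈ s, ∑ e ∈ t i, c e := by
  rw [← sup_eq_biUnion]
  exact apply_sup_le_sum (f := fun S => ∑ e ∈ S, c e) sum_empty (sum_union_le_add hc _ _) s

theorem univ_map_update_le_cons {ι T : Type*} [Fintype ι] [DecidableEq ι]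
    (D : ι → T) (i : ι) (x : T) :
    univ.val.map (Function.update D i x) ≤ x ::ₘ univ.val.map D := by
  have hsplit : ∀ R : ι → T, univ.val.map R = R i ::ₘ (univ.erase i).val.map R := by
    intro R
    rw [← insert_erase (mem_univ i), insert_val_of_notMem (notMem_erase i _), Multiset.map_cons,
      insert_erase (mem_univ i)]
  have hoff : (univ.erase i).val.map (Function.update D i x) = (univ.erase i).val.map D :=
    Multiset.map_congr rfl fun j hj => Function.update_of_ne (mem_erase.mp hj).1 x D
  rw [hsplit (Function.update D i x), Function.update_self, hoff, hsplit D]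
  exact Multiset.cons_le_cons _ (Multiset.le_cons_self _ _)

theorem prod_update_mul_prod_update {ι T M : Type*} [Fintype ι] [DecidableEq ι]
    [CommMonoid M] (f : ι → T → M) (D R : ι → T) (i : ι) :
    (∏ j, f j (Function.update D i (R i) j)) * ∏ j, f j (Function.update R i (D i) j)
      = (∏ j, f j (D j)) * ∏ j, f j (R j) := by
  rw [← prod_mul_distrib, ← prod_mul_distrib]
  refine prod_congr rfl fun j _ => ?_
  rcases eq_or_ne j i with rfl | hj
  · simp only [Function.update_self, mul_comm]
  · simp only [Function.update_of_ne hj]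

end Finset

section ProfileExpect

variable {ι T : Type*} [Fintype ι] [DecidableEq ι] [Fintype T] (π : ι → T → ℝ)

def profileExpect (f : (ι → T) → ℝ) : ℝ := ∑ R, (∏ i, π i (R i)) * f R

theorem profileExpect_add (f g : (ι → T) → ℝ) :
    profileExpect π (fun R => f R + g R) = profileExpect π f + profileExpect π g := by
  simp only [profileExpect, mul_add, sum_add_distrib]

theorem profileExpect_const_mul (a : ℝ) (f : (ι → T) → ℝ) :
    profileExpect π (fun R => a * f R) = a * profileExpect π f := by
  simp only [profileExpect, mul_sum, mul_left_comm]

theorem profileExpect_sum {κ : Type*} (s : Finset κ) (f : κ → (ι → T) → ℝ) :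
    profileExpect π (fun R => ∑ k ∈ s, f k R) = ∑ k ∈ s, profileExpect π (f k) := by
  simp only [profileExpect, mul_sum]
  exact sum_comm

variable {π}

theorem profileExpect_mono (hπ0 : ∀ i t, 0 ≤ π i t) {f g : (ι → T) → ℝ}
    (hfg : ∀ R, f R ≤ g R) : profileExpect π f ≤ profileExpect π g :=
  sum_le_sum fun R _ => mul_le_mul_of_nonneg_left (hfg R) (prod_nonneg fun i _ => hπ0 i (R i))

theorem sum_pi_prod_eq_one (hπ1 : ∀ i, ∑ t, π i t = 1) : ∑ R : ι → T, ∏ i, π i (R i) = 1 := by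
  rw [← Fintype.prod_sum]
  exact prod_eq_one fun i _ => hπ1 i

theorem profileExpect_const (hπ1 : ∀ i, ∑ t, π i t = 1) (a : ℝ) :
    profileExpect π (fun _ => a) = a := by
  rw [profileExpect, ← sum_mul, sum_pi_prod_eq_one hπ1, one_mul]

theorem exists_le_profileExpect (hπ0 : ∀ i t, 0 ≤ π i t) (hπ1 : ∀ i, ∑ t, π i t = 1)
    (f : (ι → T) → ℝ) : ∃ R, f R ≤ profileExpect π f := by
  have hne : (univ : Finset (ι → T)).Nonempty :=
    nonempty_of_sum_ne_zero (by rw [sum_pi_prod_eq_one hπ1]; exact one_ne_zero)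
  obtain ⟨R, -, hR⟩ := exists_min_image univ f hne
  exact ⟨R, (profileExpect_const hπ1 (f R)).symm.le.trans
    (profileExpect_mono hπ0 fun R' => hR R' (mem_univ R'))⟩

theorem profileExpect_resample (hπ1 : ∀ i, ∑ t, π i t = 1) (i : ι)
    (g : (ι → T) → ℝ) :
    profileExpect π (fun D => profileExpect π (fun R => g (Function.update D i (R i))))
      = profileExpect π g := by
  set w : (ι → T) → ℝ := fun R => ∏ j, π j (R j)
  -- exchanging the `i`-th coordinates of `D` and `R` is a weight-preserving involution
  let σ : (ι → T) × (ι → T) → (ι → T) × (ι → T) :=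
    fun p => (Function.update p.1 i (p.2 i), Function.update p.2 i (p.1 i))
  have hσ : Function.Involutive σ := fun p => by simp [σ]
  have hpair : ∀ h : (ι → T) → (ι → T) → ℝ,
      profileExpect π (fun D => profileExpect π (h D))
        = ∑ p : (ι → T) × (ι → T), w p.1 * w p.2 * h p.1 p.2 := by
    intro h
    simp only [profileExpect, mul_sum, Fintype.sum_prod_type, mul_assoc, w]
  calc profileExpect π (fun D => profileExpect π (fun R => g (Function.update D i (R i))))
      = ∑ p : (ι → T) × (ι → T), w p.1 * w p.2 * g (Function.update p.1 i (p.2 i)) := hpair _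
    _ = ∑ p : (ι → T) × (ι → T), w p.1 * w p.2 * g p.1 := by
        refine (Fintype.sum_bijective σ hσ.bijective _ _ fun p => ?_).symm
        simp only [σ, w, Function.update_self, Function.update_idem, Function.update_eq_self,
          prod_update_mul_prod_update]
    _ = profileExpect π (fun D => profileExpect π (fun _ => g D)) := (hpair fun D _ => g D).symm
    _ = profileExpect π g := by simp only [profileExpect_const hπ1]

end ProfileExpect

section CostSharing

variable {ι T E : Type*} [Fintype ι] [DecidableEq ι] [DecidableEq E] {c : E → ℝ}
  {A : Multiset T → Finset E} {B : Finset E → T → Finset E} {ξ : Multiset T → T → ℝ}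
  {optc : Multiset T → ℝ} {α β : ℝ}

theorem augmented_cost_le (hc : ∀ e, 0 ≤ c e) (hβ : 0 ≤ β)
    (hAapx : ∀ U : Multiset T, ∑ e ∈ A U, c e ≤ α * optc U)
    (hstrict : ∀ (U : Multiset T) (x : T), ∑ e ∈ B (A U) x, c e ≤ β * ξ (x ::ₘ U) x)
    (hmono : ∀ (U U' : Multiset T) (x : T), U ≤ U' → x ∈ U → ξ U' x ≤ ξ U x) (D R : ι → T) :
    ∑ e ∈ univ.biUnion (fun i => A (univ.val.map D) ∪ B (A (univ.val.map D)) (R i)), c e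
      ≤ α * optc (univ.val.map D)
        + β * ∑ i, ξ (univ.val.map (Function.update D i (R i))) (R i) := by
  set F := A (univ.val.map D)
  have hsub : univ.biUnion (fun i => F ∪ B F (R i)) ⊆ F ∪ univ.biUnion (fun i => B F (R i)) :=
    biUnion_subset.mpr fun i hi =>
      union_subset_union_right (subset_biUnion_of_mem (fun j => B F (R j)) hi)
  have hshare : ∀ i, ξ (R i ::ₘ univ.val.map D) (R i)
      ≤ ξ (univ.val.map (Function.update D i (R i))) (R i) := fun i =>
    hmono _ _ _ (univ_map_update_le_cons D i (R i))
      (Multiset.mem_map.mpr ⟨i, mem_univ i, Function.update_self ..⟩)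
  calc ∑ e ∈ univ.biUnion (fun i => F ∪ B F (R i)), c e
      ≤ ∑ e ∈ F ∪ univ.biUnion (fun i => B F (R i)), c e :=
        sum_le_sum_of_subset_of_nonneg hsub fun e _ _ => hc e
    _ ≤ ∑ e ∈ F, c e + ∑ i, ∑ e ∈ B F (R i), c e :=
        (sum_union_le_add hc _ _).trans (add_le_add_right (sum_biUnion_le_sum hc _ _) _)
    _ ≤ α * optc (univ.val.map D) + ∑ i, β * ξ (R i ::ₘ univ.val.map D) (R i) :=
        add_le_add (hAapx _) (sum_le_sum fun i _ => hstrict _ _)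
    _ ≤ α * optc (univ.val.map D)
          + β * ∑ i, ξ (univ.val.map (Function.update D i (R i))) (R i) := by
        rw [mul_sum]
        gcongr with i
        exact hshare i

theorem expected_augmented_cost_le [Fintype T] {π : ι → T → ℝ}
    (hπ0 : ∀ i t, 0 ≤ π i t) (hπ1 : ∀ i, ∑ t, π i t = 1) (hc : ∀ e, 0 ≤ c e) (hβ : 0 ≤ β)
    (hAapx : ∀ U : Multiset T, ∑ e ∈ A U, c e ≤ α * optc U)
    (hcomp : ∀ U : Multiset T, (U.map (fun x => ξ U x)).sum ≤ optc U)
    (hstrict : ∀ (U : Multiset T) (x : T), ∑ e ∈ B (A U) x, c e ≤ β * ξ (x ::ₘ U) x)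
    (hmono : ∀ (U U' : Multiset T) (x : T), U ≤ U' → x ∈ U → ξ U' x ≤ ξ U x) :
    profileExpect π (fun D => profileExpect π (fun R =>
        ∑ e ∈ univ.biUnion (fun i => A (univ.val.map D) ∪ B (A (univ.val.map D)) (R i)), c e))
      ≤ (α + β) * profileExpect π (fun R => optc (univ.val.map R)) := by
  have hresample : ∀ i, profileExpect π (fun D => profileExpect π (fun R =>
      ξ (univ.val.map (Function.update D i (R i))) (R i)))
        = profileExpect π (fun D => ξ (univ.val.map D) (D i)) := fun i => by
    simpa only [Function.update_self] using
      profileExpect_resample hπ1 i (fun D => ξ (univ.val.map D) (D i))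
  have hcomp_profile : ∀ D : ι → T, ∑ i, ξ (univ.val.map D) (D i) ≤ optc (univ.val.map D) :=
      fun D => by
    have h := hcomp (univ.val.map D)
    rwa [Multiset.map_map] at h
  calc _ ≤ profileExpect π (fun D => profileExpect π (fun R => α * optc (univ.val.map D)
          + β * ∑ i, ξ (univ.val.map (Function.update D i (R i))) (R i))) :=
        profileExpect_mono hπ0 fun D => profileExpect_mono hπ0 fun R =>
          augmented_cost_le hc hβ hAapx hstrict hmono D R
    _ = α * profileExpect π (fun R => optc (univ.val.map R))
          + β * profileExpect π (fun D => ∑ i, ξ (univ.val.map D) (D i)) := by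
        simp only [profileExpect_add, profileExpect_const_mul, profileExpect_sum,
          profileExpect_const hπ1, hresample]
    _ ≤ α * profileExpect π (fun R => optc (univ.val.map R))
          + β * profileExpect π (fun R => optc (univ.val.map R)) := by
        gcongr
        exact profileExpect_mono hπ0 hcomp_profile
    _ = (α + β) * profileExpect π (fun R => optc (univ.val.map R)) := by ring

end CostSharing

theorem cross_monotone_information_gap_general
    {T E : Type*} [Fintype T] [DecidableEq E]
    (n : ℕ) (π : Fin n → T → ℝ)
    (hπ0 : ∀ i t, 0 ≤ π i t) (hπ1 : ∀ i, ∑ t, π i t = 1)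
    (c : E → ℝ) (hc : ∀ e, 0 ≤ c e)
    (Fa : T → Set (Finset E))
    (α β : ℝ) (hβ : 0 ≤ β)
    (A : Multiset T → Finset E) (B : Finset E → T → Finset E)
    (ξ : Multiset T → T → ℝ)
    (optc : Multiset T → ℝ)
    (hAfeas : ∀ U : Multiset T, ∀ t ∈ U, ∃ a ∈ Fa t, a ⊆ A U)
    (hAapx : ∀ U : Multiset T, ∑ e ∈ A U, c e ≤ α * optc U)
    (hB : ∀ (F : Finset E) (U : Multiset T) (x : T),
      (∀ t ∈ U, ∃ a ∈ Fa t, a ⊆ F) →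
      ∀ t ∈ x ::ₘ U, ∃ a ∈ Fa t, a ⊆ F ∪ B F x)
    (hcomp : ∀ U : Multiset T, (U.map (fun x => ξ U x)).sum ≤ optc U)
    (hstrict : ∀ (U : Multiset T) (x : T),
      ∑ e ∈ B (A U) x, c e ≤ β * ξ (x ::ₘ U) x)
    -- cross-monotonicity: enlarging the client multiset weakly decreases shares
    (hmono : ∀ (U U' : Multiset T) (x : T), U ≤ U' → x ∈ U → ξ U' x ≤ ξ U x) :
    ∃ s : Fin n → T → Finset E,
      (∀ i t, ∃ a ∈ Fa t, a ⊆ s i t) ∧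
      (∑ R : Fin n → T, (∏ i, π i (R i)) *
          ∑ e ∈ Finset.univ.biUnion (fun i => s i (R i)), c e)
        ≤ (α + β) *
            ∑ R : Fin n → T, (∏ i, π i (R i)) * optc (Finset.univ.val.map R) := by
  obtain ⟨D, hD⟩ := exists_le_profileExpect hπ0 hπ1 fun D => profileExpect π fun R =>
    ∑ e ∈ univ.biUnion (fun i => A (univ.val.map D) ∪ B (A (univ.val.map D)) (R i)), c e
  refine ⟨fun _ t => A (univ.val.map D) ∪ B (A (univ.val.map D)) t, fun _ t => ?_,
    hD.trans (expected_augmented_cost_le hπ0 hπ1 hc hβ hAapx hcomp hstrict hmono)⟩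
  exact hB _ _ t (hAfeas _) t (Multiset.mem_cons_self t _)

/-- cross-monotone information gap bound: if the ex-post
cost-minimization problem admits an `α`-approximation algorithm `A` and an
augmentation algorithm `B` with a `β`-strict, competitive, cross-monotone
cost-sharing scheme `ξ`, then when each player `i`'s type is drawn
independently from a possibly different distribution `π i`, there exist
(feasible) Bayesian strategies `s` whose expected social cost is at most
`(α+β) · E_{R∼π}[c(OPT(R))]`; hence the information gap is at most `α + β`. -/
theorem cross_monotone_information_gap
    {T E : Type*} [Fintype T] [DecidableEq T] [Fintype E] [DecidableEq E]
    (n : ℕ) (π : Fin n → T → ℝ)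
    (hπ0 : ∀ i t, 0 ≤ π i t) (hπ1 : ∀ i, ∑ t, π i t = 1)
    (c : E → ℝ) (hc : ∀ e, 0 ≤ c e)
    (Fa : T → Set (Finset E))
    (α β : ℝ) (hα : 0 ≤ α) (hβ : 0 ≤ β)
    (A : Multiset T → Finset E) (B : Finset E → T → Finset E)
    (ξ : Multiset T → T → ℝ) (hξnn : ∀ U x, 0 ≤ ξ U x)
    (optc : Multiset T → ℝ)
    (hopt : ∀ U : Multiset T, IsLeast
      {x | ∃ S : Finset E, (∀ t ∈ U, ∃ a ∈ Fa t, a ⊆ S) ∧ x = ∑ e ∈ S, c e}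
      (optc U))
    (hAfeas : ∀ U : Multiset T, ∀ t ∈ U, ∃ a ∈ Fa t, a ⊆ A U)
    (hAapx : ∀ U : Multiset T, ∑ e ∈ A U, c e ≤ α * optc U)
    (hB : ∀ (F : Finset E) (U : Multiset T) (x : T),
      (∀ t ∈ U, ∃ a ∈ Fa t, a ⊆ F) →
      ∀ t ∈ x ::ₘ U, ∃ a ∈ Fa t, a ⊆ F ∪ B F x)
    (hξ0 : ∀ (U : Multiset T) (x : T), x ∉ U → ξ U x = 0)
    (hcomp : ∀ U : Multiset T, (U.map (fun x => ξ U x)).sum ≤ optc U)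
    (hstrict : ∀ (U : Multiset T) (x : T),
      ∑ e ∈ B (A U) x, c e ≤ β * ξ (x ::ₘ U) x)
    -- cross-monotonicity: enlarging the client multiset weakly decreases shares
    (hmono : ∀ (U U' : Multiset T) (x : T), U ≤ U' → x ∈ U → ξ U' x ≤ ξ U x) :
    ∃ s : Fin n → T → Finset E,
      (∀ i t, ∃ a ∈ Fa t, a ⊆ s i t) ∧
      (∑ R : Fin n → T, (∏ i, π i (R i)) *
          ∑ e ∈ Finset.univ.biUnion (fun i => s i (R i)), c e)
        ≤ (α + β) *
            ∑ R : Fin n → T, (∏ i, π i (R i)) * optc (Finset.univ.val.map R) :=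
  cross_monotone_information_gap_general n π hπ0 hπ1 c hc Fa α β hβ A B ξ optc hAfeas hAapx hB hcomp
    hstrict hmono
end

section
/- The Bayesian price of stability is at most the information gap times μ/λ, and in particular whenever the information gap is finite and Φ is (1, H_n)-close to C, the Bayesian price of stability of a Bayesian network design game with i.i.d. types admitting a β-strict α-approximate cost-sharing scheme is at most (α+β)·H_n = O(log n). -/
/-!
Let `s` minimize the Bayesian potential `E_R[Φ(s(R))]`, where `Φ` is Rosenthal's potential
`Σ_e c_e H(load_e)`. A deviation of player `i` at type `t` changes the Bayesian potential by
`ρ t` times the change of `i`'s interim cost, so `s` is a Bayes–Nash equilibrium (once repaired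
on types of probability zero), and `K ≤ Φ ≤ H_n K` gives `K(s) ≤ H_n K(s₀)` for every feasible
profile `s₀`.

For `s₀`, sample the types `W` of `n - 1` phantom players, compute `A(W)` once, and let a
player of type `x` buy `A(W) ∪ B(A(W), x)`. In expectation this costs at most `α E[OPT]` for
`A(W)` plus, for each of the `n` players, `β` times the cost share of a player joining `W`.
Since the types are i.i.d., that player is exchangeable with the others, so the `n` shares
together are at most `E[OPT]`.
-/

open Finset

/-- Fair cost-sharing player cost: player `i` pays, for each element of its
chosen set, the element cost divided by the number of players using it. -/
noncomputable def playerCost {E : Type*} [DecidableEq E] {n : ℕ} (c : E → ℝ)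
    (a : Fin n → Finset E) (i : Fin n) : ℝ :=
  ∑ e ∈ a i, c e / ((univ.filter (fun j : Fin n => e ∈ a j)).card : ℝ)

lemma harmonic_mono : Monotone harmonic := fun _ _ h =>
  sum_le_sum_of_subset_of_nonneg (range_mono h) fun _ _ _ => by positivity

lemma one_le_harmonic {k : ℕ} (hk : k ≠ 0) : 1 ≤ harmonic k := by
  simpa using harmonic_mono (Nat.one_le_iff_ne_zero.2 hk)

namespace FairCostSharing

variable {E : Type*} [DecidableEq E] {n : ℕ}

def load (a : Fin n → Finset E) (e : E) : ℕ := #{j | e ∈ a j}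

lemma load_le (a : Fin n → Finset E) (e : E) : load a e ≤ n :=
  (card_filter_le _ _).trans (card_fin n).le

lemma load_ne_zero_iff {a : Fin n → Finset E} {e : E} : load a e ≠ 0 ↔ e ∈ univ.sup a := by
  simp [load, Finset.mem_sup]

lemma load_eq_load_update_empty_add (a : Fin n → Finset E) (i : Fin n) (e : E) :
    load a e = load (Function.update a i ∅) e + if e ∈ a i then 1 else 0 := by
  unfold load
  split_ifs with h
  · rw [← card_insert_of_notMem (s := {j | e ∈ Function.update a i ∅ j}) (a := i) (by simp)]
    congr 1
    ext j
    by_cases hj : j = i <;> simp [hj, h]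
  · rw [add_zero]
    congr 1
    ext j
    by_cases hj : j = i <;> simp [hj, h]

lemma playerCost_eq_sum_ite (c : E → ℝ) (a : Fin n → Finset E) (i : Fin n) [Fintype E] :
    playerCost c a i = ∑ e, if e ∈ a i then c e / load a e else 0 := by
  rw [playerCost, ← sum_filter, filter_mem_eq_inter, univ_inter]; rfl

variable [Fintype E]

noncomputable def rosenthalPotential (c : E → ℝ) (a : Fin n → Finset E) : ℝ :=
  ∑ e, c e * harmonic (load a e)

lemma rosenthalPotential_eq_update_empty_add (c : E → ℝ) (a : Fin n → Finset E) (i : Fin n) :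
    rosenthalPotential c a = rosenthalPotential c (Function.update a i ∅) + playerCost c a i := by
  rw [rosenthalPotential, rosenthalPotential, playerCost_eq_sum_ite, ← sum_add_distrib]
  refine sum_congr rfl fun e _ => ?_
  rw [load_eq_load_update_empty_add a i e]
  split_ifs
  · push_cast [harmonic_succ]; ring
  · simp

lemma rosenthalPotential_update_sub (c : E → ℝ) (a : Fin n → Finset E) (i : Fin n) (b : Finset E) :
    rosenthalPotential c (Function.update a i b) - rosenthalPotential c a
      = playerCost c (Function.update a i b) i - playerCost c a i := by
  rw [rosenthalPotential_eq_update_empty_add c a i,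
    rosenthalPotential_eq_update_empty_add c (Function.update a i b) i, Function.update_idem]
  ring

lemma sum_playerCost_eq (c : E → ℝ) (a : Fin n → Finset E) :
    ∑ i, playerCost c a i = ∑ e ∈ univ.sup a, c e := by
  simp only [playerCost_eq_sum_ite]
  rw [sum_comm, ← sum_subset (subset_univ (univ.sup a))]
  · refine sum_congr rfl fun e he => ?_
    rw [← sum_filter, sum_const, nsmul_eq_mul]
    have : (load a e : ℝ) ≠ 0 := by exact_mod_cast load_ne_zero_iff.2 he
    exact mul_div_cancel₀ _ this
  · intro e _ he
    exact sum_eq_zero fun j _ => if_neg fun h => he (mem_sup.2 ⟨j, mem_univ j, h⟩)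

lemma rosenthalPotential_eq_sum_sup (c : E → ℝ) (a : Fin n → Finset E) :
    rosenthalPotential c a = ∑ e ∈ univ.sup a, c e * harmonic (load a e) := by
  refine (sum_subset (subset_univ _) fun e _ he => ?_).symm
  rw [not_ne_iff.1 (mt load_ne_zero_iff.1 he)]
  simp

lemma sum_playerCost_le_rosenthalPotential {c : E → ℝ} (hc : ∀ e, 0 ≤ c e)
    (a : Fin n → Finset E) : ∑ i, playerCost c a i ≤ rosenthalPotential c a := by
  rw [sum_playerCost_eq, rosenthalPotential_eq_sum_sup]
  refine sum_le_sum fun e he => le_mul_of_one_le_right (hc e) ?_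
  exact_mod_cast one_le_harmonic (load_ne_zero_iff.2 he)

lemma rosenthalPotential_le_harmonic_mul {c : E → ℝ} (hc : ∀ e, 0 ≤ c e)
    (a : Fin n → Finset E) : rosenthalPotential c a ≤ harmonic n * ∑ i, playerCost c a i := by
  rw [sum_playerCost_eq, rosenthalPotential_eq_sum_sup, mul_sum]
  refine sum_le_sum fun e _ => ?_
  rw [mul_comm]
  gcongr
  · exact hc e
  · exact harmonic_mono (load_le a e)

lemma sum_playerCost_union_le {c : E → ℝ} (hc : ∀ e, 0 ≤ c e) (F : Finset E)
    (G : Fin n → Finset E) :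
    ∑ i, playerCost c (fun j => F ∪ G j) i ≤ ∑ e ∈ F, c e + ∑ j, ∑ e ∈ G j, c e := by
  have subadd : ∀ {S S' : Finset E}, ∑ e ∈ S ⊔ S', c e ≤ ∑ e ∈ S, c e + ∑ e ∈ S', c e :=
    fun {S S'} => by
      rw [← sum_union_inter]
      exact le_add_of_nonneg_right (sum_nonneg fun e _ => hc e)
  calc ∑ i, playerCost c (fun j => F ∪ G j) i = ∑ e ∈ univ.sup fun j => F ∪ G j, c e :=
        sum_playerCost_eq c _
    _ ≤ ∑ e ∈ F ⊔ univ.sup G, c e := by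
        refine sum_le_sum_of_subset_of_nonneg ?_ fun e _ _ => hc e
        exact Finset.sup_le fun j _ => sup_le_sup_left (le_sup (f := G) (mem_univ j)) F
    _ ≤ ∑ e ∈ F, c e + ∑ e ∈ univ.sup G, c e := subadd
    _ ≤ ∑ e ∈ F, c e + ∑ j, ∑ e ∈ G j, c e := by
        gcongr
        exact apply_sup_le_sum (f := fun S => ∑ e ∈ S, c e) sum_empty subadd univ

end FairCostSharing

namespace BayesianGame

section Expectation

variable {ι T : Type*} [DecidableEq ι]

lemma mul_prod_eq_mul_prod_update [Fintype ι] (ρ : T → ℝ) (R : ι → T) (i : ι) (t : T) :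
    ρ t * ∏ j, ρ (R j) = ρ (R i) * ∏ j, ρ (Function.update R i t j) := by
  have split : ∀ S : ι → T, ∏ j, ρ (S j) = ρ (S i) * ∏ j ∈ univ.erase i, ρ (S j) :=
    fun S => (mul_prod_erase univ _ (mem_univ i)).symm
  have rest : ∏ j ∈ univ.erase i, ρ (Function.update R i t j) = ∏ j ∈ univ.erase i, ρ (R j) :=
    prod_congr rfl fun j hj => by rw [Function.update_of_ne (ne_of_mem_erase hj)]
  rw [split R, split (Function.update R i t), Function.update_self, rest]
  ring

def updateEquiv (i : ι) : T × (ι → T) ≃ (ι → T) × T where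
  toFun p := (Function.update p.2 i p.1, p.2 i)
  invFun q := (q.1 i, Function.update q.1 i q.2)
  left_inv p := by simp
  right_inv q := by simp

variable [Fintype ι] [Fintype T]

def iidExpect (ρ : T → ℝ) (f : (ι → T) → ℝ) : ℝ := ∑ R, (∏ j, ρ (R j)) * f R

variable {ρ : T → ℝ}

lemma sum_prod_eq_one (hρ1 : ∑ t, ρ t = 1) : ∑ R : ι → T, ∏ j, ρ (R j) = 1 := by
  rw [← Fintype.prod_sum (fun (_ : ι) t => ρ t)]
  simp [hρ1]

lemma iidExpect_const (hρ1 : ∑ t, ρ t = 1) (a : ℝ) : iidExpect ρ (fun _ : ι → T => a) = a := by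
  rw [iidExpect, ← sum_mul, sum_prod_eq_one hρ1, one_mul]

lemma iidExpect_mono (hρ0 : ∀ t, 0 ≤ ρ t) {f g : (ι → T) → ℝ} (h : ∀ R, f R ≤ g R) :
    iidExpect ρ f ≤ iidExpect ρ g :=
  sum_le_sum fun R _ => mul_le_mul_of_nonneg_left (h R) (prod_nonneg fun _ _ => hρ0 _)

lemma iidExpect_add (f g : (ι → T) → ℝ) :
    iidExpect ρ (fun R => f R + g R) = iidExpect ρ f + iidExpect ρ g := by
  simp only [iidExpect, mul_add, sum_add_distrib]

lemma iidExpect_sub (f g : (ι → T) → ℝ) :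
    iidExpect ρ (fun R => f R - g R) = iidExpect ρ f - iidExpect ρ g := by
  simp only [iidExpect, mul_sub, sum_sub_distrib]

lemma iidExpect_const_mul (a : ℝ) (f : (ι → T) → ℝ) :
    iidExpect ρ (fun R => a * f R) = a * iidExpect ρ f := by
  simp only [iidExpect, mul_sum]
  exact sum_congr rfl fun R _ => by ring

lemma iidExpect_sum {κ : Type*} (s : Finset κ) (f : κ → (ι → T) → ℝ) :
    iidExpect ρ (fun R => ∑ k ∈ s, f k R) = ∑ k ∈ s, iidExpect ρ (f k) := by
  simp only [iidExpect, mul_sum]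
  exact sum_comm

lemma iidExpect_congr {f g : (ι → T) → ℝ} (h : ∀ R, (∀ j, ρ (R j) ≠ 0) → f R = g R) :
    iidExpect ρ f = iidExpect ρ g := by
  refine sum_congr rfl fun R _ => ?_
  by_cases hR : ∀ j, ρ (R j) ≠ 0
  · rw [h R hR]
  · push Not at hR
    obtain ⟨j, hj⟩ := hR
    rw [prod_eq_zero (mem_univ j) hj, zero_mul, zero_mul]

lemma exists_le_iidExpect (hρ0 : ∀ t, 0 ≤ ρ t) (hρ1 : ∑ t, ρ t = 1) (f : (ι → T) → ℝ) :
    ∃ R, f R ≤ iidExpect ρ f := by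
  have : Nonempty T := by
    by_contra h
    simp [not_nonempty_iff.1 h] at hρ1
  obtain ⟨R, hR⟩ := Finite.exists_min f
  exact ⟨R, (iidExpect_const hρ1 (f R)).symm.le.trans (iidExpect_mono hρ0 hR)⟩

lemma iidExpect_eq_sum_mul_update (hρ1 : ∑ t, ρ t = 1) (i : ι) (f : (ι → T) → ℝ) :
    iidExpect ρ f = ∑ t, ρ t * iidExpect ρ (fun R => f (Function.update R i t)) := by
  symm
  calc ∑ t, ρ t * iidExpect ρ (fun R => f (Function.update R i t))
      = ∑ p : T × (ι → T), ρ (p.2 i) * (∏ j, ρ (Function.update p.2 i p.1 j))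
          * f (Function.update p.2 i p.1) := by
        rw [Fintype.sum_prod_type]
        refine sum_congr rfl fun t _ => ?_
        rw [iidExpect, mul_sum]
        refine sum_congr rfl fun R _ => ?_
        rw [← mul_assoc, mul_prod_eq_mul_prod_update ρ R i t]
    _ = ∑ q : (ι → T) × T, ρ q.2 * (∏ j, ρ (q.1 j)) * f q.1 :=
        (updateEquiv i).sum_comp fun q => ρ q.2 * (∏ j, ρ (q.1 j)) * f q.1
    _ = iidExpect ρ f := by
        rw [Fintype.sum_prod_type, iidExpect]
        refine sum_congr rfl fun R _ => ?_
        dsimp only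
        rw [← sum_mul, ← sum_mul, hρ1, one_mul]

lemma iidExpect_apply (hρ1 : ∑ t, ρ t = 1) (i : ι) (g : T → ℝ) :
    iidExpect ρ (fun R => g (R i)) = ∑ t, ρ t * g t := by
  rw [iidExpect_eq_sum_mul_update hρ1 i]
  simp only [Function.update_self, iidExpect_const hρ1]

lemma iidExpect_ite_eq [DecidableEq T] (hρ1 : ∑ t, ρ t = 1) (i : ι) (t : T)
    (f : (ι → T) → ℝ) :
    iidExpect ρ (fun R => if R i = t then f R else 0)
      = ρ t * iidExpect ρ (fun R => f (Function.update R i t)) := by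
  rw [iidExpect_eq_sum_mul_update hρ1 i, sum_eq_single t]
  · simp
  · intro y _ hy
    simp [hy, iidExpect]
  · simp

lemma iidExpect_comp_perm (σ : Equiv.Perm ι) (f : (ι → T) → ℝ) :
    iidExpect ρ (fun R => f (R ∘ σ)) = iidExpect ρ f := by
  refine Fintype.sum_equiv (σ.symm.arrowCongr (Equiv.refl T)) _ _ fun R => ?_
  simp only [Equiv.arrowCongr_apply, Equiv.symm_symm, Equiv.coe_refl, Function.id_comp]
  rw [← Equiv.prod_comp σ (fun j => ρ (R j))]
  rfl

end Expectation

section Resampling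

variable {ι T : Type*} [Fintype ι] [DecidableEq ι]

def others (i : ι) (W : ι → T) : Multiset T := (univ.val.erase i).map W

lemma cons_others (i : ι) (W : ι → T) : W i ::ₘ others i W = univ.val.map W := by
  rw [others, ← Multiset.map_cons, Multiset.cons_erase (mem_univ i)]

lemma others_update (i : ι) (W : ι → T) (x : T) : others i (Function.update W i x) = others i W :=
  Multiset.map_congr rfl fun _ hj =>
    Function.update_of_ne ((univ.nodup.mem_erase_iff).1 hj).1 x W

variable [Fintype T] {ρ : T → ℝ}

lemma iidExpect_sum_cons_others (hρ1 : ∑ t, ρ t = 1) (i : ι) (g : Multiset T → T → ℝ) :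
    iidExpect ρ (fun W => ∑ x, ρ x * g (x ::ₘ others i W) x)
      = iidExpect ρ (fun W => g (univ.val.map W) (W i)) := by
  rw [iidExpect_eq_sum_mul_update hρ1 i (fun W => g (univ.val.map W) (W i))]
  simp only [← iidExpect_const_mul, ← iidExpect_sum]
  congr 1
  funext W
  refine sum_congr rfl fun x _ => ?_
  rw [← cons_others i (Function.update W i x), others_update, Function.update_self]

lemma iidExpect_map_apply_eq (i k : ι) (g : Multiset T → T → ℝ) :
    iidExpect ρ (fun W => g (univ.val.map W) (W i))
      = iidExpect ρ (fun W => g (univ.val.map W) (W k)) := by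
  have map_comp_swap : ∀ W : ι → T, univ.val.map (W ∘ Equiv.swap i k) = univ.val.map W :=
    fun W => by rw [← Multiset.map_map, Multiset.map_univ_val_equiv]
  rw [← iidExpect_comp_perm (Equiv.swap i k)]
  simp only [map_comp_swap]
  simp only [Function.comp_apply, Equiv.swap_apply_left]

lemma card_mul_iidExpect_sum_cons_others (hρ1 : ∑ t, ρ t = 1) (i : ι) (g : Multiset T → T → ℝ) :
    Fintype.card ι * iidExpect ρ (fun W => ∑ x, ρ x * g (x ::ₘ others i W) x)
      = iidExpect ρ (fun W : ι → T => ((univ.val.map W).map (g (univ.val.map W))).sum) := by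
  simp only [Multiset.map_map, Function.comp_def, ← sum_eq_multiset_sum, iidExpect_sum,
    iidExpect_sum_cons_others hρ1, ← iidExpect_map_apply_eq i, sum_const, card_univ, nsmul_eq_mul]

end Resampling

section BayesianPotential

open FairCostSharing

variable {T E : Type*} [Fintype T] [DecidableEq E] {n : ℕ} (ρ : T → ℝ) (c : E → ℝ)

noncomputable def expectedSocialCost (s : Fin n → T → Finset E) : ℝ :=
  iidExpect ρ fun R => ∑ i, playerCost c (fun j => s j (R j)) i

noncomputable def interimCost (s : Fin n → T → Finset E) (i : Fin n) (t : T) (a : Finset E) : ℝ :=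
  iidExpect ρ fun R => playerCost c (Function.update (fun j => s j (Function.update R i t j)) i a) i

def IsBayesNash (Fa : T → Set (Finset E)) (s : Fin n → T → Finset E) : Prop :=
  ∀ i t a, a ∈ Fa t → interimCost ρ c s i t (s i t) ≤ interimCost ρ c s i t a

variable {ρ c}

lemma interimCost_self (s : Fin n → T → Finset E) (i : Fin n) (t : T) :
    interimCost ρ c s i t (s i t)
      = iidExpect ρ fun R => playerCost c (fun j => s j (Function.update R i t j)) i := by
  simp only [interimCost]
  congr
  funext R
  rw [Function.update_eq_self_iff.2 (by simp)]

lemma interimCost_congr {s s' : Fin n → T → Finset E} (h : ∀ j u, ρ u ≠ 0 → s j u = s' j u)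
    (i : Fin n) (t : T) (a : Finset E) :
    interimCost ρ c s i t a = interimCost ρ c s' i t a := by
  refine iidExpect_congr fun R hR => ?_
  congr 1
  funext j
  by_cases hj : j = i
  · subst hj; simp
  · simp [Function.update_of_ne hj, h j _ (hR j)]

lemma expectedSocialCost_congr {s s' : Fin n → T → Finset E}
    (h : ∀ j u, ρ u ≠ 0 → s j u = s' j u) :
    expectedSocialCost ρ c s = expectedSocialCost ρ c s' :=
  iidExpect_congr fun R hR => by simp only [h _ _ (hR _)]

variable [Fintype E]

variable (ρ c) in
noncomputable def bayesPotential (s : Fin n → T → Finset E) : ℝ :=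
  iidExpect ρ fun R => rosenthalPotential c fun j => s j (R j)

variable [DecidableEq T]

lemma bayesPotential_update_sub (hρ1 : ∑ t, ρ t = 1) (s : Fin n → T → Finset E) (i : Fin n)
    (t : T) (a : Finset E) :
    bayesPotential ρ c (Function.update s i (Function.update (s i) t a)) - bayesPotential ρ c s
      = ρ t * (interimCost ρ c s i t a - interimCost ρ c s i t (s i t)) := by
  have pointwise : ∀ R : Fin n → T,
      rosenthalPotential c (fun j => Function.update s i (Function.update (s i) t a) j (R j))
        - rosenthalPotential c (fun j => s j (R j))
      = if R i = t then playerCost c (Function.update (fun j => s j (R j)) i a) i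
          - playerCost c (fun j => s j (R j)) i else 0 := by
    intro R
    split_ifs with hR
    · rw [← rosenthalPotential_update_sub]
      congr 2
      funext j
      by_cases hj : j = i
      · subst hj; simp [hR]
      · simp [hj]
    · rw [sub_eq_zero]
      congr 1
      funext j
      by_cases hj : j = i
      · subst hj; simp [hR]
      · simp [hj]
  rw [bayesPotential, bayesPotential, ← iidExpect_sub]
  simp only [pointwise, iidExpect_ite_eq hρ1, iidExpect_sub, interimCost_self]
  rfl

lemma interimCost_le_of_isMin (hρ0 : ∀ t, 0 ≤ ρ t) (hρ1 : ∑ t, ρ t = 1)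
    {Fa : T → Set (Finset E)} {s : Fin n → T → Finset E} (hs : ∀ i t, s i t ∈ Fa t)
    (hmin : ∀ s' : Fin n → T → Finset E, (∀ i t, s' i t ∈ Fa t) →
      bayesPotential ρ c s ≤ bayesPotential ρ c s')
    {i : Fin n} {t : T} {a : Finset E} (ha : a ∈ Fa t) (hρt : ρ t ≠ 0) :
    interimCost ρ c s i t (s i t) ≤ interimCost ρ c s i t a := by
  have deviation_feasible : ∀ j u, Function.update s i (Function.update (s i) t a) j u ∈ Fa u := by
    intro j u
    by_cases hj : j = i
    · subst hj
      by_cases hu : u = t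
      · subst hu; simpa using ha
      · simpa [hu] using hs j u
    · simpa [hj] using hs j u
  have := sub_nonneg.2 (hmin _ deviation_feasible)
  rw [bayesPotential_update_sub hρ1] at this
  exact sub_nonneg.1 ((mul_nonneg_iff_of_pos_left ((hρ0 t).lt_of_ne' hρt)).1 this)

lemma exists_isBayesNash_of_isMin (hρ0 : ∀ t, 0 ≤ ρ t) (hρ1 : ∑ t, ρ t = 1)
    {Fa : T → Set (Finset E)} (hFa : ∀ t, (Fa t).Nonempty) {s : Fin n → T → Finset E}
    (hs : ∀ i t, s i t ∈ Fa t)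
    (hmin : ∀ s' : Fin n → T → Finset E, (∀ i t, s' i t ∈ Fa t) →
      bayesPotential ρ c s ≤ bayesPotential ρ c s') :
    ∃ s' : Fin n → T → Finset E, (∀ i t, s' i t ∈ Fa t) ∧ IsBayesNash ρ c Fa s' ∧
      expectedSocialCost ρ c s' = expectedSocialCost ρ c s := by
  -- Changing `s` at null types changes no interim or expected cost: every profile containing
  -- such a type has weight zero.
  have bestResponse : ∀ i t, ∃ b ∈ Fa t, ∀ a ∈ Fa t,
      interimCost ρ c s i t b ≤ interimCost ρ c s i t a :=
    fun i t => (Fa t).exists_min_image _ (Set.toFinite _) (hFa t)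
  choose b hbFa hb using bestResponse
  let s' : Fin n → T → Finset E := fun i t => if ρ t = 0 then b i t else s i t
  have agree : ∀ j u, ρ u ≠ 0 → s' j u = s j u := fun j u h => if_neg h
  refine ⟨s', fun i t => ?_, fun i t a ha => ?_, expectedSocialCost_congr agree⟩
  · by_cases h : ρ t = 0 <;> simp [s', h, hbFa, hs]
  · rw [interimCost_congr agree, interimCost_congr agree]
    by_cases h : ρ t = 0
    · simpa only [s', if_pos h] using hb i t a ha
    · simpa only [s', if_neg h] using interimCost_le_of_isMin hρ0 hρ1 hs hmin ha h

theorem exists_isBayesNash_expectedSocialCost_le (hρ0 : ∀ t, 0 ≤ ρ t) (hρ1 : ∑ t, ρ t = 1)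
    (hc : ∀ e, 0 ≤ c e) {Fa : T → Set (Finset E)} (hFa : ∀ t, (Fa t).Nonempty)
    {s₀ : Fin n → T → Finset E} (hs₀ : ∀ i t, s₀ i t ∈ Fa t) :
    ∃ s : Fin n → T → Finset E, (∀ i t, s i t ∈ Fa t) ∧ IsBayesNash ρ c Fa s ∧
      expectedSocialCost ρ c s ≤ harmonic n * expectedSocialCost ρ c s₀ := by
  obtain ⟨s, hs, hmin⟩ := Set.exists_min_image {s : Fin n → T → Finset E | ∀ i t, s i t ∈ Fa t}
    (bayesPotential ρ c) (Set.toFinite _) ⟨s₀, hs₀⟩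
  obtain ⟨s', hs', hNash, hcost⟩ := exists_isBayesNash_of_isMin hρ0 hρ1 hFa hs hmin
  refine ⟨s', hs', hNash, ?_⟩
  calc expectedSocialCost ρ c s' = expectedSocialCost ρ c s := hcost
    _ ≤ bayesPotential ρ c s :=
        iidExpect_mono hρ0 fun R => sum_playerCost_le_rosenthalPotential hc _
    _ ≤ bayesPotential ρ c s₀ := hmin s₀ hs₀
    _ ≤ iidExpect ρ fun R => harmonic n * ∑ i, playerCost c (fun j => s₀ j (R j)) i :=
        iidExpect_mono hρ0 fun R => rosenthalPotential_le_harmonic_mul hc _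
    _ = harmonic n * expectedSocialCost ρ c s₀ := iidExpect_const_mul _ _

end BayesianPotential

section NetworkDesign

open FairCostSharing

lemma optc_le_optc_cons {T E : Type*} {c : E → ℝ} {Fa : T → Set (Finset E)}
    {optc : Multiset T → ℝ}
    (hopt : ∀ U : Multiset T, IsLeast
      {x | ∃ S : Finset E, (∀ t ∈ U, ∃ a ∈ Fa t, a ⊆ S) ∧ x = ∑ e ∈ S, c e} (optc U))
    (U : Multiset T) (x : T) : optc U ≤ optc (x ::ₘ U) := by
  obtain ⟨S, hS, hx⟩ := (hopt (x ::ₘ U)).1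
  exact (hopt U).2 ⟨S, fun t ht => hS t (Multiset.mem_cons_of_mem ht), hx⟩

lemma union_augment_mem {T E : Type*} [DecidableEq E] {Fa : T → Set (Finset E)}
    (hup : ∀ (t : T) (a b : Finset E), a ∈ Fa t → a ⊆ b → b ∈ Fa t)
    {A : Multiset T → Finset E} {B : Finset E → T → Finset E}
    (hAfeas : ∀ U : Multiset T, ∀ t ∈ U, ∃ a ∈ Fa t, a ⊆ A U)
    (hB : ∀ (F : Finset E) (U : Multiset T) (x : T),
      (∀ t ∈ U, ∃ a ∈ Fa t, a ⊆ F) → ∀ t ∈ x ::ₘ U, ∃ a ∈ Fa t, a ⊆ F ∪ B F x)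
    (U : Multiset T) (x : T) : A U ∪ B (A U) x ∈ Fa x := by
  obtain ⟨a, ha, hsub⟩ := hB (A U) U x (hAfeas U) x (Multiset.mem_cons_self x U)
  exact hup x a _ ha hsub

variable {T E : Type*} [Fintype T] [Fintype E] [DecidableEq E] {n : ℕ} {ρ : T → ℝ} {c : E → ℝ}

lemma expectedSocialCost_union_le (hρ0 : ∀ t, 0 ≤ ρ t) (hρ1 : ∑ t, ρ t = 1)
    (hc : ∀ e, 0 ≤ c e) (F : Finset E) (G : T → Finset E) :
    expectedSocialCost ρ c (fun (_ : Fin n) x => F ∪ G x)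
      ≤ ∑ e ∈ F, c e + n * ∑ x, ρ x * ∑ e ∈ G x, c e := by
  calc expectedSocialCost ρ c (fun (_ : Fin n) x => F ∪ G x)
      ≤ iidExpect ρ fun R => ∑ e ∈ F, c e + ∑ j, ∑ e ∈ G (R j), c e :=
        iidExpect_mono hρ0 fun R => sum_playerCost_union_le hc F _
    _ = ∑ e ∈ F, c e + n * ∑ x, ρ x * ∑ e ∈ G x, c e := by
        simp only [iidExpect_add, iidExpect_const hρ1, iidExpect_sum,
          iidExpect_apply hρ1 _ (fun x => ∑ e ∈ G x, c e), sum_const, card_univ,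
          Fintype.card_fin, nsmul_eq_mul]

theorem exists_augment_expectedSocialCost_le [DecidableEq T] (hρ0 : ∀ t, 0 ≤ ρ t)
    (hρ1 : ∑ t, ρ t = 1) (hc : ∀ e, 0 ≤ c e) {Fa : T → Set (Finset E)} {α β : ℝ} (hα : 0 ≤ α)
    (hβ : 0 ≤ β) {A : Multiset T → Finset E} {B : Finset E → T → Finset E}
    {ξ : Multiset T → T → ℝ} {optc : Multiset T → ℝ}
    (hopt : ∀ U : Multiset T, IsLeast
      {x | ∃ S : Finset E, (∀ t ∈ U, ∃ a ∈ Fa t, a ⊆ S) ∧ x = ∑ e ∈ S, c e} (optc U))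
    (hAapx : ∀ U : Multiset T, ∑ e ∈ A U, c e ≤ α * optc U)
    (hcomp : ∀ U : Multiset T, (U.map (fun x => ξ U x)).sum ≤ optc U)
    (hstrict : ∀ (U : Multiset T) (x : T), ∑ e ∈ B (A U) x, c e ≤ β * ξ (x ::ₘ U) x)
    (i₀ : Fin n) :
    ∃ W : Fin n → T,
      expectedSocialCost ρ c (fun (_ : Fin n) x => A (others i₀ W) ∪ B (A (others i₀ W)) x)
        ≤ (α + β) * iidExpect ρ fun W : Fin n → T => optc (univ.val.map W) := by
  set OPT := iidExpect ρ fun W : Fin n → T => optc (univ.val.map W)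
  have approx : (iidExpect ρ fun W => ∑ e ∈ A (others i₀ W), c e) ≤ α * OPT := by
    rw [← iidExpect_const_mul]
    refine iidExpect_mono hρ0 fun W => (hAapx _).trans (mul_le_mul_of_nonneg_left ?_ hα)
    rw [← cons_others i₀ W]
    exact optc_le_optc_cons hopt _ _
  have sharing : n * (iidExpect ρ fun W => ∑ x, ρ x * ξ (x ::ₘ others i₀ W) x) ≤ OPT := by
    have := (card_mul_iidExpect_sum_cons_others hρ1 i₀ ξ).trans_le
      (iidExpect_mono hρ0 fun W => hcomp _)
    rwa [Fintype.card_fin] at this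
  have strict : ∀ U, ∑ x, ρ x * ∑ e ∈ B (A U) x, c e ≤ β * ∑ x, ρ x * ξ (x ::ₘ U) x := by
    intro U
    rw [mul_sum]
    exact sum_le_sum fun x _ =>
      (mul_le_mul_of_nonneg_left (hstrict U x) (hρ0 x)).trans_eq (mul_left_comm _ _ _)
  obtain ⟨W, hW⟩ := exists_le_iidExpect hρ0 hρ1
    fun W => expectedSocialCost ρ c (fun (_ : Fin n) x => A (others i₀ W) ∪ B (A (others i₀ W)) x)
  refine ⟨W, hW.trans ?_⟩
  calc (iidExpect ρ fun W =>
        expectedSocialCost ρ c (fun (_ : Fin n) x => A (others i₀ W) ∪ B (A (others i₀ W)) x))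
      ≤ iidExpect ρ fun W => ∑ e ∈ A (others i₀ W), c e
          + β * (n * ∑ x, ρ x * ξ (x ::ₘ others i₀ W) x) :=
        iidExpect_mono hρ0 fun W => (expectedSocialCost_union_le hρ0 hρ1 hc _ _).trans <|
          add_le_add le_rfl ((mul_le_mul_of_nonneg_left (strict _) n.cast_nonneg).trans_eq
            (mul_left_comm _ _ _))
    _ = (iidExpect ρ fun W => ∑ e ∈ A (others i₀ W), c e)
          + β * (n * iidExpect ρ fun W => ∑ x, ρ x * ξ (x ::ₘ others i₀ W) x) := by
        rw [iidExpect_add, iidExpect_const_mul, iidExpect_const_mul]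
    _ ≤ α * OPT + β * OPT := add_le_add approx (mul_le_mul_of_nonneg_left sharing hβ)
    _ = (α + β) * OPT := by ring

end NetworkDesign

end BayesianGame

open BayesianGame

theorem bayesian_price_of_stability_network_design_general
    {T E : Type*} [Fintype T] [DecidableEq T] [Fintype E] [DecidableEq E]
    (n : ℕ) (ρ : T → ℝ) (hρ0 : ∀ t, 0 ≤ ρ t) (hρ1 : ∑ t, ρ t = 1)
    (c : E → ℝ) (hc : ∀ e, 0 ≤ c e)
    (Fa : T → Set (Finset E))
    -- feasible actions are upward closed (supersets of feasible sets are feasible)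
    (hup : ∀ (t : T) (a b : Finset E), a ∈ Fa t → a ⊆ b → b ∈ Fa t)
    (α β : ℝ) (hα : 0 ≤ α) (hβ : 0 ≤ β)
    (A : Multiset T → Finset E) (B : Finset E → T → Finset E)
    (ξ : Multiset T → T → ℝ)
    (optc : Multiset T → ℝ)
    -- optc U is the minimum cost of a feasible solution for client set U
    (hopt : ∀ U : Multiset T, IsLeast
      {x | ∃ S : Finset E, (∀ t ∈ U, ∃ a ∈ Fa t, a ⊆ S) ∧ x = ∑ e ∈ S, c e}
      (optc U))
    (hAfeas : ∀ U : Multiset T, ∀ t ∈ U, ∃ a ∈ Fa t, a ⊆ A U)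
    (hAapx : ∀ U : Multiset T, ∑ e ∈ A U, c e ≤ α * optc U)
    (hB : ∀ (F : Finset E) (U : Multiset T) (x : T),
      (∀ t ∈ U, ∃ a ∈ Fa t, a ⊆ F) →
      ∀ t ∈ x ::ₘ U, ∃ a ∈ Fa t, a ⊆ F ∪ B F x)
    (hcomp : ∀ U : Multiset T, (U.map (fun x => ξ U x)).sum ≤ optc U)
    (hstrict : ∀ (U : Multiset T) (x : T),
      ∑ e ∈ B (A U) x, c e ≤ β * ξ (x ::ₘ U) x)
    -- expected ex-post optimal social cost, assumed positive
    (EOPT : ℝ)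
    (hEOPTdef : EOPT = ∑ R : Fin n → T, (∏ i, ρ (R i)) * optc (Finset.univ.val.map R)) :
    ∃ s : Fin n → T → Finset E,
      (∀ i t, s i t ∈ Fa t) ∧
      -- s is a Bayes-Nash equilibrium
      (∀ (i : Fin n) (ti : T) (a' : Finset E), a' ∈ Fa ti →
        (∑ R : Fin n → T, (∏ j, ρ (R j)) *
            playerCost c (fun j => s j (Function.update R i ti j)) i)
          ≤ ∑ R : Fin n → T, (∏ j, ρ (R j)) *
              playerCost c
                (Function.update (fun j => s j (Function.update R i ti j)) i a') i) ∧
      -- and its expected social cost is at most (α+β)·H_n·E[OPT]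
      (∑ R : Fin n → T, (∏ j, ρ (R j)) *
          ∑ i, playerCost c (fun j => s j (R j)) i)
        ≤ (α + β) * (∑ k ∈ Finset.range n, (1 : ℝ) / (k + 1)) * EOPT := by
  have hFa : ∀ t, (Fa t).Nonempty := fun t =>
    let ⟨a, ha, _⟩ := hAfeas {t} t (Multiset.mem_singleton_self t)
    ⟨a, ha⟩
  obtain ⟨s₀, hs₀, hs₀cost⟩ : ∃ s₀ : Fin n → T → Finset E, (∀ i t, s₀ i t ∈ Fa t) ∧
      (harmonic n : ℝ) * expectedSocialCost ρ c s₀ ≤ harmonic n * ((α + β) * EOPT) := by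
    rcases n.eq_zero_or_pos with rfl | hn
    · exact ⟨fun _ t => (hFa t).some, fun _ t => (hFa t).some_mem, by simp⟩
    · obtain ⟨W, hW⟩ := exists_augment_expectedSocialCost_le hρ0 hρ1 hc hα hβ hopt hAapx hcomp
        hstrict ⟨0, hn⟩
      exact ⟨_, fun _ => union_augment_mem hup hAfeas hB _, mul_le_mul_of_nonneg_left
        (hW.trans_eq (by rw [hEOPTdef]; rfl)) (by exact_mod_cast (harmonic_pos hn.ne').le)⟩
  obtain ⟨s, hs, hNash, hcost⟩ := exists_isBayesNash_expectedSocialCost_le hρ0 hρ1 hc hFa hs₀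
  refine ⟨s, hs, fun i t a ha => ?_, ?_⟩
  · exact (interimCost_self s i t).symm.trans_le (hNash i t a ha)
  · calc _ ≤ (harmonic n : ℝ) * ((α + β) * EOPT) := hcost.trans hs₀cost
      _ = _ := by push_cast [harmonic, one_div]; ring

/-- Combining the Bayesian potential method (BPoS ≤ (μ/λ)·IG),
the `(1, H_n)`-closeness of Rosenthal's potential to the social cost in fair
cost-sharing games, and the i.i.d. information gap bound `IG ≤ α + β` under an
`α`-approximation algorithm with a `β`-strict competitive cost-sharing scheme:
a Bayesian network design game with i.i.d. types admits a Bayes-Nash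
equilibrium `s` with expected social cost `K(s) ≤ (α+β)·H_n·E_t[OPT(t)]`,
i.e. its Bayesian price of stability is at most `(α+β)·H_n = O(log n)`. -/
theorem bayesian_price_of_stability_network_design
    {T E : Type*} [Fintype T] [DecidableEq T] [Fintype E] [DecidableEq E]
    (n : ℕ) (ρ : T → ℝ) (hρ0 : ∀ t, 0 ≤ ρ t) (hρ1 : ∑ t, ρ t = 1)
    (c : E → ℝ) (hc : ∀ e, 0 ≤ c e)
    (Fa : T → Set (Finset E))
    -- feasible actions are upward closed (supersets of feasible sets are feasible)
    (hup : ∀ (t : T) (a b : Finset E), a ∈ Fa t → a ⊆ b → b ∈ Fa t)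
    (α β : ℝ) (hα : 0 ≤ α) (hβ : 0 ≤ β)
    (A : Multiset T → Finset E) (B : Finset E → T → Finset E)
    (ξ : Multiset T → T → ℝ) (hξnn : ∀ U x, 0 ≤ ξ U x)
    (optc : Multiset T → ℝ)
    -- optc U is the minimum cost of a feasible solution for client set U
    (hopt : ∀ U : Multiset T, IsLeast
      {x | ∃ S : Finset E, (∀ t ∈ U, ∃ a ∈ Fa t, a ⊆ S) ∧ x = ∑ e ∈ S, c e}
      (optc U))
    (hAfeas : ∀ U : Multiset T, ∀ t ∈ U, ∃ a ∈ Fa t, a ⊆ A U)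
    (hAapx : ∀ U : Multiset T, ∑ e ∈ A U, c e ≤ α * optc U)
    (hB : ∀ (F : Finset E) (U : Multiset T) (x : T),
      (∀ t ∈ U, ∃ a ∈ Fa t, a ⊆ F) →
      ∀ t ∈ x ::ₘ U, ∃ a ∈ Fa t, a ⊆ F ∪ B F x)
    (hξ0 : ∀ (U : Multiset T) (x : T), x ∉ U → ξ U x = 0)
    (hcomp : ∀ U : Multiset T, (U.map (fun x => ξ U x)).sum ≤ optc U)
    (hstrict : ∀ (U : Multiset T) (x : T),
      ∑ e ∈ B (A U) x, c e ≤ β * ξ (x ::ₘ U) x)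
    -- expected ex-post optimal social cost, assumed positive
    (EOPT : ℝ)
    (hEOPTdef : EOPT = ∑ R : Fin n → T, (∏ i, ρ (R i)) * optc (Finset.univ.val.map R))
    (hEOPT : 0 < EOPT) :
    ∃ s : Fin n → T → Finset E,
      (∀ i t, s i t ∈ Fa t) ∧
      -- s is a Bayes-Nash equilibrium
      (∀ (i : Fin n) (ti : T) (a' : Finset E), a' ∈ Fa ti →
        (∑ R : Fin n → T, (∏ j, ρ (R j)) *
            playerCost c (fun j => s j (Function.update R i ti j)) i)
          ≤ ∑ R : Fin n → T, (∏ j, ρ (R j)) *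
              playerCost c
                (Function.update (fun j => s j (Function.update R i ti j)) i a') i) ∧
      -- and its expected social cost is at most (α+β)·H_n·E[OPT]
      (∑ R : Fin n → T, (∏ j, ρ (R j)) *
          ∑ i, playerCost c (fun j => s j (R j)) i)
        ≤ (α + β) * (∑ k ∈ Finset.range n, (1 : ℝ) / (k + 1)) * EOPT :=
  bayesian_price_of_stability_network_design_general n ρ hρ0 hρ1 c hc Fa hup α β hα hβ A B ξ optc
    hopt hAfeas hAapx hB hcomp hstrict EOPT hEOPTdef
end
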